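/- arXiv:2506.19032 — 9 statements merged into one kernel-verified Lean document; each statement's English description precedes it below -/
import Mathlib

section
/- Let q ≥ 4 be an integer. Then (q⁴ − 1)/gcd(4, q − 1) has at least 3 distinct prime divisors. -/
-- Helper: an odd number ≥ 2 has an odd prime factor, namely its minFac.
lemma odd_minFac {m : ℕ} (h1 : m % 2 = 1) (h2 : 2 ≤ m) :
    (Nat.minFac m).Prime ∧ Nat.minFac m ≠ 2 ∧ Nat.minFac m ∣ m := by
  have hm1 : m ≠ 1 := by omega
  have hp : (Nat.minFac m).Prime := Nat.minFac_prime hm1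
  have hd : Nat.minFac m ∣ m := Nat.minFac_dvd m
  refine ⟨hp, ?_, hd⟩
  intro h
  rw [h] at hd
  omega

-- Helper: three distinct primes dividing n force at least 3 prime factors.
lemma three_primes {n a b c : ℕ} (hn : n ≠ 0) (ha : a.Prime) (hb : b.Prime)
    (hc : c.Prime) (hab : a ≠ b) (hac : a ≠ c) (hbc : b ≠ c)
    (da : a ∣ n) (db : b ∣ n) (dc : c ∣ n) :
    3 ≤ n.primeFactors.card := by
  have hsub : ({a, b, c} : Finset ℕ) ⊆ n.primeFactors := by
    intro x hx
    simp only [Finset.mem_insert, Finset.mem_singleton] at hx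
    rcases hx with rfl | rfl | rfl
    · exact Nat.mem_primeFactors.2 ⟨ha, da, hn⟩
    · exact Nat.mem_primeFactors.2 ⟨hb, db, hn⟩
    · exact Nat.mem_primeFactors.2 ⟨hc, dc, hn⟩
  have hcard : ({a, b, c} : Finset ℕ).card = 3 := by
    rw [Finset.card_insert_of_notMem (by simp [hab, hac]),
      Finset.card_insert_of_notMem (by simp [hbc]), Finset.card_singleton]
  calc 3 = ({a, b, c} : Finset ℕ).card := hcard.symm
    _ ≤ n.primeFactors.card := Finset.card_le_card hsub

theorem stmt_3 (q : ℕ) (hq : 4 ≤ q) :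
    3 ≤ ((q ^ 4 - 1) / Nat.gcd 4 (q - 1)).primeFactors.card := by
  set g := Nat.gcd 4 (q - 1) with hg
  set N := (q ^ 4 - 1) / g with hN
  -- basic size facts
  have hq4 : 256 ≤ q ^ 4 := by
    calc (256 : ℕ) = 4 ^ 4 := by norm_num
    _ ≤ q ^ 4 := Nat.pow_le_pow_left hq 4
  have hq2 : 16 ≤ q ^ 2 := by
    calc (16 : ℕ) = 4 ^ 2 := by norm_num
    _ ≤ q ^ 2 := Nat.pow_le_pow_left hq 2
  have hgdvd4 : g ∣ 4 := Nat.gcd_dvd_left 4 (q - 1)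
  have hgpos : 0 < g := Nat.gcd_pos_of_pos_left _ (by norm_num)
  -- g divides q^4 - 1
  have hq1dvd : q - 1 ∣ q ^ 4 - 1 := by
    have := Nat.sub_dvd_pow_sub_pow q 1 4
    simpa using this
  have hgdvdq4 : g ∣ q ^ 4 - 1 := (Nat.gcd_dvd_right 4 (q - 1)).trans hq1dvd
  have hNg : N * g = q ^ 4 - 1 := Nat.div_mul_cancel hgdvdq4
  have hNne : N ≠ 0 := by
    intro h
    rw [h, zero_mul] at hNg
    omega
  -- factorization identities
  have hfac1 : q ^ 2 - 1 = (q - 1) * (q + 1) := by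
    zify [show 1 ≤ q ^ 2 by omega, show 1 ≤ q by omega]
    ring
  have hfac2 : q ^ 4 - 1 = (q ^ 2 - 1) * (q ^ 2 + 1) := by
    zify [show 1 ≤ q ^ 4 by omega, show 1 ≤ q ^ 2 by omega]
    ring
  have hdvd_q1 : q - 1 ∣ q ^ 4 - 1 := hq1dvd
  have hdvd_q1' : q + 1 ∣ q ^ 4 - 1 := by
    rw [hfac2, hfac1]
    exact Dvd.dvd.mul_right (Dvd.dvd.mul_left dvd_rfl (q - 1)) _
  have hdvd_q21 : q ^ 2 - 1 ∣ q ^ 4 - 1 := ⟨q ^ 2 + 1, hfac2⟩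
  have hdvd_q2p1 : q ^ 2 + 1 ∣ q ^ 4 - 1 := ⟨q ^ 2 - 1, by rw [hfac2, mul_comm]⟩
  rcases Nat.even_or_odd q with heven | hodd
  · -- q even: g = 1, three odd pairwise distinct primes from q-1, q+1, q^2+1
    have hq2mod : q % 2 = 0 := Nat.even_iff.1 heven
    have hg1 : g = 1 := by
      have : Nat.Coprime 2 (q - 1) :=
        Nat.coprime_two_left.2 (Nat.odd_iff.2 (by omega))
      have h4 : Nat.Coprime 4 (q - 1) := by
        have := Nat.Coprime.pow_left 2 this
        simpa [show (2:ℕ)^2 = 4 by norm_num] using this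
      exact h4
    have hNeq : N = q ^ 4 - 1 := by rw [hN, hg1, Nat.div_one]
    obtain ⟨hp1, hp1ne, hp1d⟩ := odd_minFac (m := q - 1) (by omega) (by omega)
    obtain ⟨hp2, hp2ne, hp2d⟩ := odd_minFac (m := q + 1) (by omega) (by omega)
    have hq2odd : (q ^ 2 + 1) % 2 = 1 := by
      have : q ^ 2 % 2 = 0 := by
        rcases heven with ⟨k, hk⟩
        subst hk
        have : (k + k) ^ 2 = 2 * (2 * k ^ 2) := by ring
        omega
      omega
    obtain ⟨hp3, hp3ne, hp3d⟩ := odd_minFac (m := q ^ 2 + 1) hq2odd (by omega)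
    apply three_primes hNne hp1 hp2 hp3
    · -- minFac (q-1) ≠ minFac (q+1)
      intro h
      have hd2 : Nat.minFac (q - 1) ∣ 2 := by
        have := Nat.dvd_sub (h ▸ hp2d) hp1d
        simpa [show q + 1 - (q - 1) = 2 by omega] using this
      exact hp1ne ((Nat.prime_dvd_prime_iff_eq hp1 Nat.prime_two).1 hd2)
    · intro h
      have hdq21 : Nat.minFac (q - 1) ∣ q ^ 2 - 1 := hp1d.trans ⟨q + 1, hfac1⟩
      have hd2 : Nat.minFac (q - 1) ∣ 2 := by
        have := Nat.dvd_sub (h ▸ hp3d) hdq21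
        simpa [show q ^ 2 + 1 - (q ^ 2 - 1) = 2 by omega] using this
      exact hp1ne ((Nat.prime_dvd_prime_iff_eq hp1 Nat.prime_two).1 hd2)
    · intro h
      have hdq21 : Nat.minFac (q + 1) ∣ q ^ 2 - 1 := hp2d.trans ⟨q - 1, by rw [hfac1, mul_comm]⟩
      have hd2 : Nat.minFac (q + 1) ∣ 2 := by
        have := Nat.dvd_sub (h ▸ hp3d) hdq21
        simpa [show q ^ 2 + 1 - (q ^ 2 - 1) = 2 by omega] using this
      exact hp2ne ((Nat.prime_dvd_prime_iff_eq hp2 Nat.prime_two).1 hd2)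
    · rw [hNeq]; exact hp1d.trans hdvd_q1
    · rw [hNeq]; exact hp2d.trans hdvd_q1'
    · rw [hNeq]; exact hp3d.trans hdvd_q2p1
  · -- q odd
    have hqmod : q % 2 = 1 := Nat.odd_iff.1 hodd
    -- 16 divides q^4 - 1
    have h16 : 16 ∣ q ^ 4 - 1 := by
      have hmod : q ^ 4 % 16 = 1 := by
        have h1 : q ^ 4 % 16 = (q % 16) ^ 4 % 16 := by rw [Nat.pow_mod]
        have h2 : q % 16 % 2 = 1 := by omega
        have h3 : q % 16 < 16 := Nat.mod_lt _ (by norm_num)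
        rw [h1]
        interval_cases h : q % 16 <;> omega
      omega
    -- odd primes dividing q^4-1 divide N
    have hodd_dvd_N : ∀ p : ℕ, p.Prime → p ≠ 2 → p ∣ q ^ 4 - 1 → p ∣ N := by
      intro p hp hp2 hpd
      have : p ∣ N * g := by rw [hNg]; exact hpd
      rcases (Nat.Prime.dvd_mul hp).1 this with h | h
      · exact h
      · exfalso
        have : p ∣ 4 := h.trans hgdvd4
        have h24 : p ∣ 2 * 2 := by simpa using this
        rcases (Nat.Prime.dvd_mul hp).1 h24 with h | h <;>
          exact hp2 ((Nat.prime_dvd_prime_iff_eq hp Nat.prime_two).1 h)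
    -- 2 divides N
    have h2N : (2 : ℕ) ∣ N := by
      rw [hN, Nat.dvd_div_iff_mul_dvd hgdvdq4]
      have : 2 * g ∣ 8 := by
        rcases hgdvd4 with ⟨c, hc⟩
        exact ⟨c, by rw [show 2 * g * c = 2 * (g * c) by ring, ← hc]⟩
      rw [mul_comm]
      exact this.trans (dvd_trans ⟨2, by norm_num⟩ h16)
    -- odd prime p2 dividing q^2 - 1
    obtain ⟨a, haodd, ha2, had⟩ :
        ∃ a : ℕ, a % 2 = 1 ∧ 2 ≤ a ∧ a ∣ q ^ 2 - 1 := by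
      rcases Nat.even_or_odd ((q - 1) / 2) with he | ho
      · -- q ≡ 1 mod 4, take (q+1)/2
        have h4 : q % 4 = 1 := by
          have := Nat.even_iff.1 he
          omega
        refine ⟨(q + 1) / 2, by omega, by omega, ?_⟩
        have : (q + 1) / 2 ∣ q + 1 := ⟨2, by omega⟩
        exact this.trans ⟨q - 1, by rw [hfac1, mul_comm]⟩
      · refine ⟨(q - 1) / 2, by have := Nat.odd_iff.1 ho; omega, by
          have := Nat.odd_iff.1 ho; omega, ?_⟩
        have : (q - 1) / 2 ∣ q - 1 := ⟨2, by omega⟩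
        exact this.trans ⟨q + 1, hfac1⟩
    obtain ⟨hp2, hp2ne, hp2d⟩ := odd_minFac haodd ha2
    have hp2d' : Nat.minFac a ∣ q ^ 2 - 1 := hp2d.trans had
    -- odd prime p3 dividing q^2 + 1
    have hq2mod4 : q ^ 2 % 4 = 1 := by
      have h1 : q ^ 2 % 4 = (q % 4) ^ 2 % 4 := by rw [Nat.pow_mod]
      have h2 : q % 4 % 2 = 1 := by omega
      have h3 : q % 4 < 4 := Nat.mod_lt _ (by norm_num)
      rw [h1]
      interval_cases h : q % 4 <;> omega
    have hbodd : ((q ^ 2 + 1) / 2) % 2 = 1 := by omega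
    obtain ⟨hp3, hp3ne, hp3d⟩ := odd_minFac hbodd (by omega)
    have hp3d' : Nat.minFac ((q ^ 2 + 1) / 2) ∣ q ^ 2 + 1 :=
      hp3d.trans ⟨2, by omega⟩
    apply three_primes hNne Nat.prime_two hp2 hp3
    · exact fun h => hp2ne h.symm
    · exact fun h => hp3ne h.symm
    · intro h
      have hd2 : Nat.minFac a ∣ 2 := by
        have := Nat.dvd_sub (h ▸ hp3d') hp2d'
        simpa [show q ^ 2 + 1 - (q ^ 2 - 1) = 2 by omega] using this
      exact hp2ne ((Nat.prime_dvd_prime_iff_eq hp2 Nat.prime_two).1 hd2)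
    · exact h2N
    · exact hodd_dvd_N _ hp2 hp2ne (hp2d'.trans hdvd_q21)
    · exact hodd_dvd_N _ hp3 hp3ne (hp3d'.trans hdvd_q2p1)
end

section
/- Let q be a prime power such that q² − 1 has exactly two distinct prime divisors. Then q ∈ {4, 5, 7, 8, 9, 17}. Moreover, for any odd integer q ≥ 3, q² − 1 has exactly two distinct prime divisors if and only if (q² − 1)/4 has exactly two distinct prime divisors. -/
lemma my_sub_one_mul (x : ℕ) (hx : 1 ≤ x) : (x - 1) * (x + 1) = x ^ 2 - 1 := by
  obtain ⟨y, rfl⟩ := Nat.exists_eq_add_of_le hx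
  have h : (1 + y) ^ 2 = y * (1 + y + 1) + 1 := by ring
  simp only [Nat.add_sub_cancel_left, h, Nat.add_sub_cancel]

lemma my_pf_singleton {n p : ℕ} (hn : n ≠ 0) (h : n.primeFactors ⊆ {p}) :
    ∃ k, n = p ^ k := by
  have hs : n.factorization.support ⊆ {p} := by rwa [Nat.support_factorization]
  rw [Finsupp.support_subset_singleton] at hs
  exact ⟨n.factorization p, Nat.eq_pow_of_factorization_eq_single hn hs⟩

lemma my_two_pow_mod3 (e : ℕ) : 2 ^ e % 3 = if Even e then 1 else 2 := by
  induction e with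
  | zero => simp
  | succ n ih =>
    rw [pow_succ, Nat.mul_mod, ih]
    by_cases h : Even n <;> simp [h, Nat.even_add_one]

lemma my_three_pow_mod8 (a : ℕ) : 3 ^ a % 8 = if Even a then 1 else 3 := by
  induction a with
  | zero => simp
  | succ n ih =>
    rw [pow_succ, Nat.mul_mod, ih]
    by_cases h : Even n <;> simp [h, Nat.even_add_one]

lemma my_three_pow_mod16 (a : ℕ) : 3 ^ a % 16 = 3 ^ (a % 4) % 16 := by
  have h : (3:ℕ) ^ a = (3 ^ 4) ^ (a / 4) * 3 ^ (a % 4) := by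
    rw [← pow_mul, ← pow_add, Nat.div_add_mod]
  rw [h, Nat.mul_mod, Nat.pow_mod]
  norm_num

lemma my_lemA {e a : ℕ} (h : 2 ^ e = 3 ^ a + 1) : e ≤ 2 := by
  by_contra hc
  push_neg at hc
  have h8 : (8:ℕ) ∣ 2 ^ e := by
    have := pow_dvd_pow 2 (show 3 ≤ e by omega)
    simpa using this
  rw [h] at h8
  have := my_three_pow_mod8 a
  by_cases hp : Even a <;> simp [hp] at this <;> omega

lemma my_lemB {e a : ℕ} (h : 2 ^ e + 1 = 3 ^ a) : e ≤ 3 := by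
  by_contra hc
  push_neg at hc
  have h16 : (16:ℕ) ∣ 2 ^ e := by
    have := pow_dvd_pow 2 (show 4 ≤ e by omega)
    simpa using this
  have hm : 3 ^ a % 16 = 1 := by omega
  rw [my_three_pow_mod16] at hm
  have hr : a % 4 = 0 := by
    have h4 : a % 4 < 4 := Nat.mod_lt _ (by norm_num)
    interval_cases h : a % 4 <;> simp_all
  obtain ⟨c, rfl⟩ := Nat.dvd_of_mod_eq_zero hr
  have h5 : 3 ^ (4 * c) % 5 = 1 := by
    rw [pow_mul, Nat.pow_mod]
    norm_num
  have h5d : (5:ℕ) ∣ 2 ^ e := by omega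
  have := Nat.Prime.dvd_of_dvd_pow (p := 5) (by norm_num) h5d
  norm_num at this

lemma my_primepow_eq {n p : ℕ} (hn : IsPrimePow n) (hp : p.Prime) (h : p ∣ n) :
    ∃ k, 0 < k ∧ n = p ^ k := by
  obtain ⟨r, k, hr, hk, rfl⟩ := (isPrimePow_nat_iff n).mp hn
  have : p ∣ r := hp.dvd_of_dvd_pow h
  rw [(Nat.prime_dvd_prime_iff_eq hp hr).mp this]
  exact ⟨k, hk, rfl⟩

lemma my_part1 (q : ℕ) (hq : IsPrimePow q) (hcard : (q ^ 2 - 1).primeFactors.card = 2) :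
    q ∈ ({4, 5, 7, 8, 9, 17} : Finset ℕ) := by
  rcases Nat.even_or_odd q with heq | hodd
  · -- q even: q = 2^e
    obtain ⟨e, he, rfl⟩ : ∃ e, 1 ≤ e ∧ q = 2 ^ e := by
      obtain ⟨k, hk, hqe⟩ := my_primepow_eq hq Nat.prime_two heq.two_dvd
      exact ⟨k, hk, hqe⟩
    by_cases he1 : e = 1
    · subst he1
      have h3 : ((2:ℕ) ^ 1) ^ 2 - 1 = 3 := by norm_num
      rw [h3, Nat.Prime.primeFactors (by norm_num)] at hcard
      simp at hcard
    · have he2 : 2 ≤ e := by omega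
      have hx4 : 4 ≤ 2 ^ e := by
        have := Nat.pow_le_pow_right (show 0 < 2 by norm_num) he2
        simpa using this
      have hmul : (2 ^ e - 1) * (2 ^ e + 1) = (2 ^ e) ^ 2 - 1 := my_sub_one_mul _ (by omega)
      have hAodd : ¬ 2 ∣ 2 ^ e - 1 := by
        have : 2 ∣ 2 ^ e := dvd_pow_self 2 (by omega)
        omega
      have hco : Nat.Coprime (2 ^ e - 1) (2 ^ e + 1) := by
        have hg2 : Nat.gcd (2 ^ e - 1) (2 ^ e + 1) ∣ 2 := by
          have hd := Nat.dvd_sub (Nat.gcd_dvd_right (2 ^ e - 1) (2 ^ e + 1))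
            (Nat.gcd_dvd_left (2 ^ e - 1) (2 ^ e + 1))
          have h2 : (2 ^ e + 1) - (2 ^ e - 1) = 2 := by omega
          rwa [h2] at hd
        rcases (Nat.dvd_prime Nat.prime_two).mp hg2 with h | h
        · exact h
        · have hgl := Nat.gcd_dvd_left (2 ^ e - 1) (2 ^ e + 1)
          rw [h] at hgl
          exact absurd hgl hAodd
      rw [← hmul, Nat.Coprime.primeFactors_mul hco,
        Finset.card_union_of_disjoint hco.disjoint_primeFactors] at hcard
      have hA1 : 1 ≤ (2 ^ e - 1).primeFactors.card :=
        Finset.card_pos.mpr (Nat.nonempty_primeFactors.mpr (by omega))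
      have hB1 : 1 ≤ (2 ^ e + 1).primeFactors.card :=
        Finset.card_pos.mpr (Nat.nonempty_primeFactors.mpr (by omega))
      have hApp : IsPrimePow (2 ^ e - 1) :=
        isPrimePow_iff_card_primeFactors_eq_one.mpr (by omega)
      have hBpp : IsPrimePow (2 ^ e + 1) :=
        isPrimePow_iff_card_primeFactors_eq_one.mpr (by omega)
      rcases Nat.even_or_odd e with hse | hso
      · have hmod := my_two_pow_mod3 e
        simp only [hse, if_pos] at hmod
        have h3 : 3 ∣ 2 ^ e - 1 := by omega
        obtain ⟨a, ha, hAe⟩ := my_primepow_eq hApp (by norm_num) h3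
        have heq3 : 2 ^ e = 3 ^ a + 1 := by omega
        have := my_lemA heq3
        have : e = 2 := by omega
        subst this
        decide
      · have hmod := my_two_pow_mod3 e
        simp only [Nat.not_even_iff_odd.mpr hso, if_neg, not_false_iff] at hmod
        have h3 : 3 ∣ 2 ^ e + 1 := by omega
        obtain ⟨a, ha, hBe⟩ := my_primepow_eq hBpp (by norm_num) h3
        have heq3 : 2 ^ e + 1 = 3 ^ a := by omega
        have := my_lemB heq3
        have he3 : e = 3 := by
          rcases hso with ⟨r, rfl⟩
          omega
        subst he3
        decide
  · -- q odd
    have hq2 := hq.two_le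
    have hq3 : 3 ≤ q := by rcases hodd with ⟨t, rfl⟩; omega
    by_cases hq3' : q = 3
    · subst hq3'
      have h8 : (3:ℕ) ^ 2 - 1 = 2 ^ 3 := by norm_num
      rw [h8, Nat.primeFactors_prime_pow (by norm_num) Nat.prime_two] at hcard
      simp at hcard
    have hq5 : 5 ≤ q := by rcases hodd with ⟨t, rfl⟩; omega
    have hq2sq : 25 ≤ q ^ 2 := by nlinarith
    have hN0 : q ^ 2 - 1 ≠ 0 := by omega
    have hmul : (q - 1) * (q + 1) = q ^ 2 - 1 := my_sub_one_mul q (by omega)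
    have h2N : 2 ∣ q ^ 2 - 1 := by
      obtain ⟨m, hm⟩ := hodd.pow (n := 2)
      omega
    have h2pf : 2 ∈ (q ^ 2 - 1).primeFactors :=
      Nat.mem_primeFactors.mpr ⟨Nat.prime_two, h2N, hN0⟩
    obtain ⟨a, b, hab, habs⟩ := Finset.card_eq_two.mp hcard
    obtain ⟨p, hp2, hpf⟩ : ∃ p, p ≠ 2 ∧ (q ^ 2 - 1).primeFactors = {2, p} := by
      rw [habs] at h2pf
      simp only [Finset.mem_insert, Finset.mem_singleton] at h2pf
      rcases h2pf with rfl | rfl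
      · exact ⟨b, fun h => hab h.symm, habs⟩
      · exact ⟨a, fun h => hab h, by rw [habs, Finset.pair_comm]⟩
    have hppf : p ∈ (q ^ 2 - 1).primeFactors := by rw [hpf]; simp
    have hpp : p.Prime := Nat.prime_of_mem_primeFactors hppf
    have hsub : ∀ m : ℕ, m ∣ q ^ 2 - 1 → m.primeFactors ⊆ {2, p} := fun m hm =>
      hpf ▸ Nat.primeFactors_mono hm hN0
    by_cases hpd : p ∣ q - 1
    · -- q + 1 = 2^s, q = 2^s - 1
      have hpnd : ¬ p ∣ q + 1 := by
        intro h
        have hd := Nat.dvd_sub h hpd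
        have h2 : q + 1 - (q - 1) = 2 := by omega
        rw [h2] at hd
        exact hp2 ((Nat.prime_dvd_prime_iff_eq hpp Nat.prime_two).mp hd)
      have hsubB : (q + 1).primeFactors ⊆ {2} := by
        intro r hr
        have hr2 := hsub (q + 1) (hmul ▸ dvd_mul_left (q + 1) (q - 1)) hr
        simp only [Finset.mem_insert, Finset.mem_singleton] at hr2 ⊢
        rcases hr2 with rfl | rfl
        · rfl
        · exact absurd (Nat.dvd_of_mem_primeFactors hr) hpnd
      obtain ⟨s, hsB⟩ := my_pf_singleton (by omega) hsubB
      have hs3 : 3 ≤ s := by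
        by_contra hc
        push_neg at hc
        interval_cases s <;> omega
      have hsplit : 2 * 2 ^ (s - 1) = 2 ^ s := by
        rw [← pow_succ']
        congr 1
        omega
      have h4s : 4 ≤ 2 ^ (s - 1) := by
        have := Nat.pow_le_pow_right (show 0 < 2 by norm_num) (show 2 ≤ s - 1 by omega)
        simpa using this
      have hmodd : ¬ 2 ∣ 2 ^ (s - 1) - 1 := by
        have : 2 ∣ 2 ^ (s - 1) := dvd_pow_self 2 (by omega)
        omega
      have hmdvd : (2 ^ (s - 1) - 1) ∣ q ^ 2 - 1 :=
        dvd_trans ⟨2, by omega⟩ (hmul ▸ dvd_mul_right (q - 1) (q + 1))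
      have hsubm : (2 ^ (s - 1) - 1).primeFactors ⊆ {p} := by
        intro r hr
        have hr2 := hsub _ hmdvd hr
        simp only [Finset.mem_insert, Finset.mem_singleton] at hr2 ⊢
        rcases hr2 with rfl | rfl
        · exact absurd (Nat.dvd_of_mem_primeFactors hr) hmodd
        · rfl
      obtain ⟨c, hmc⟩ := my_pf_singleton (by omega) hsubm
      rcases Nat.even_or_odd s with hse | hso
      · exfalso
        have hmod := my_two_pow_mod3 s
        simp only [hse, if_pos] at hmod
        have h3 : 3 ∣ q := by omega
        obtain ⟨k, hk, hqk⟩ := my_primepow_eq hq (by norm_num) h3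
        have heq3 : 2 ^ s = 3 ^ k + 1 := by omega
        have := my_lemA heq3
        omega
      · have hse' : Even (s - 1) := by
          rcases hso with ⟨r, rfl⟩
          exact ⟨r, by omega⟩
        have hmod := my_two_pow_mod3 (s - 1)
        simp only [hse', if_pos] at hmod
        have h3 : 3 ∣ 2 ^ (s - 1) - 1 := by omega
        rw [hmc] at h3
        have hp3 : p = 3 :=
          ((Nat.prime_dvd_prime_iff_eq (by norm_num) hpp).mp
            (Nat.Prime.dvd_of_dvd_pow (by norm_num) h3)).symm
        rw [hp3] at hmc
        have heq3 : 2 ^ (s - 1) = 3 ^ c + 1 := by omega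
        have := my_lemA heq3
        have hs' : s = 3 := by
          rcases hso with ⟨r, rfl⟩
          omega
        subst hs'
        have : q = 7 := by norm_num at hsB ⊢; omega
        subst this
        decide
    · -- q - 1 = 2^s, q = 2^s + 1
      have hsubA : (q - 1).primeFactors ⊆ {2} := by
        intro r hr
        have hr2 := hsub (q - 1) (hmul ▸ dvd_mul_right (q - 1) (q + 1)) hr
        simp only [Finset.mem_insert, Finset.mem_singleton] at hr2 ⊢
        rcases hr2 with rfl | rfl
        · rfl
        · exact absurd (Nat.dvd_of_mem_primeFactors hr) hpd
      obtain ⟨s, hsA⟩ := my_pf_singleton (by omega) hsubA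
      have hs2 : 2 ≤ s := by
        by_contra hc
        push_neg at hc
        interval_cases s <;> omega
      have hsplit : 2 * 2 ^ (s - 1) = 2 ^ s := by
        rw [← pow_succ']
        congr 1
        omega
      have h2s : 2 ≤ 2 ^ (s - 1) := by
        have := Nat.pow_le_pow_right (show 0 < 2 by norm_num) (show 1 ≤ s - 1 by omega)
        simpa using this
      have hmodd : ¬ 2 ∣ 2 ^ (s - 1) + 1 := by
        have : 2 ∣ 2 ^ (s - 1) := dvd_pow_self 2 (by omega)
        omega
      have hmdvd : (2 ^ (s - 1) + 1) ∣ q ^ 2 - 1 :=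
        dvd_trans ⟨2, by omega⟩ (hmul ▸ dvd_mul_left (q + 1) (q - 1))
      have hsubm : (2 ^ (s - 1) + 1).primeFactors ⊆ {p} := by
        intro r hr
        have hr2 := hsub _ hmdvd hr
        simp only [Finset.mem_insert, Finset.mem_singleton] at hr2 ⊢
        rcases hr2 with rfl | rfl
        · exact absurd (Nat.dvd_of_mem_primeFactors hr) hmodd
        · rfl
      obtain ⟨c, hmc⟩ := my_pf_singleton (by omega) hsubm
      rcases Nat.even_or_odd s with hse | hso
      · -- s even, s - 1 odd : 3 ∣ 2^(s-1)+1 = p^c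
        have hso' : Odd (s - 1) := by
          rcases hse with ⟨r, rfl⟩
          exact ⟨r - 1, by omega⟩
        have hmod := my_two_pow_mod3 (s - 1)
        simp only [Nat.not_even_iff_odd.mpr hso', if_neg, not_false_iff] at hmod
        have h3 : 3 ∣ 2 ^ (s - 1) + 1 := by omega
        rw [hmc] at h3
        have hp3 : p = 3 :=
          ((Nat.prime_dvd_prime_iff_eq (by norm_num) hpp).mp
            (Nat.Prime.dvd_of_dvd_pow (by norm_num) h3)).symm
        rw [hp3] at hmc
        have heq3 : 2 ^ (s - 1) + 1 = 3 ^ c := by omega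
        have := my_lemB heq3
        have hs' : s = 2 ∨ s = 4 := by
          rcases hse with ⟨r, rfl⟩
          omega
        rcases hs' with rfl | rfl
        · have : q = 5 := by norm_num at hsA ⊢; omega
          subst this; decide
        · have : q = 17 := by norm_num at hsA ⊢; omega
          subst this; decide
      · -- s odd : 3 ∣ q = 2^s + 1
        have hmod := my_two_pow_mod3 s
        simp only [Nat.not_even_iff_odd.mpr hso, if_neg, not_false_iff] at hmod
        have h3 : 3 ∣ q := by omega
        obtain ⟨k, hk, hqk⟩ := my_primepow_eq hq (by norm_num) h3
        have heq3 : 2 ^ s + 1 = 3 ^ k := by omega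
        have := my_lemB heq3
        have hs' : s = 3 := by
          rcases hso with ⟨r, rfl⟩
          omega
        subst hs'
        have : q = 9 := by norm_num at hsA ⊢; omega
        subst this; decide

theorem stmt_4 :
    (∀ q : ℕ, IsPrimePow q → (q ^ 2 - 1).primeFactors.card = 2 →
      q ∈ ({4, 5, 7, 8, 9, 17} : Finset ℕ)) ∧
    (∀ q : ℕ, 3 ≤ q → Odd q →
      ((q ^ 2 - 1).primeFactors.card = 2 ↔ ((q ^ 2 - 1) / 4).primeFactors.card = 2)) := by
  constructor
  · exact my_part1
  · intro q hq hodd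
    obtain ⟨t, rfl⟩ : ∃ t, q = 2 * t + 1 := by
      obtain ⟨t, ht⟩ := hodd
      exact ⟨t, by omega⟩
    have ht1 : 1 ≤ t := by omega
    have hkey : (2 * t + 1) ^ 2 - 1 = 4 * (t ^ 2 + t) := by
      have h : (2 * t + 1) ^ 2 = 4 * (t ^ 2 + t) + 1 := by ring
      omega
    have hne : t ^ 2 + t ≠ 0 := by
      have : 0 < t ^ 2 := pow_pos (by omega) 2
      omega
    have heven : 2 ∣ t ^ 2 + t := by
      have h : t ^ 2 + t = t * (t + 1) := by ring
      rw [h]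
      exact (Nat.even_mul_succ_self t).two_dvd
    have hdiv : ((2 * t + 1) ^ 2 - 1) / 4 = t ^ 2 + t := by
      rw [hkey]
      exact Nat.mul_div_cancel_left _ (by norm_num)
    have hpf : ((2 * t + 1) ^ 2 - 1).primeFactors = (t ^ 2 + t).primeFactors := by
      rw [hkey, show (4:ℕ) = 2 ^ 2 from rfl,
        Nat.primeFactors_mul (by norm_num) hne,
        Nat.primeFactors_prime_pow (by norm_num) Nat.prime_two]
      have h2 : 2 ∈ (t ^ 2 + t).primeFactors :=
        Nat.mem_primeFactors.mpr ⟨Nat.prime_two, heven, hne⟩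
      exact Finset.union_eq_right.mpr (Finset.singleton_subset_iff.mpr h2)
    rw [hpf, hdiv]
end

section
/- Let n ≥ 5 be an integer with n ≠ 9. Let p₁ < p₂ < p₃ < ⋯ be the primes in increasing order, let k be the largest integer such that p₁ + p₂ + ⋯ + p_k ≤ n, and let p be the largest prime with p ≤ n. Then n < p₁ + p₂ + ⋯ + p_{k−1} + p. -/
open Nat Finset

private lemma cnt_eq (v j : ℕ) (h : @Nat.count Nat.Prime (fun n => Nat.decidablePrime n) v = j) :
    Nat.count Nat.Prime v = j := by convert h using 2

private lemma nth_eq (v j : ℕ) (hv : Nat.Prime v) (h : Nat.count Nat.Prime v = j) :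
    Nat.nth Nat.Prime j = v := h ▸ Nat.nth_count hv

set_option maxRecDepth 10000

private lemma q0 : Nat.nth Nat.Prime 0 = 2 := nth_eq _ _ (by norm_num) (cnt_eq _ _ (by decide))
private lemma q1 : Nat.nth Nat.Prime 1 = 3 := nth_eq _ _ (by norm_num) (cnt_eq _ _ (by decide))
private lemma q2 : Nat.nth Nat.Prime 2 = 5 := nth_eq _ _ (by norm_num) (cnt_eq _ _ (by decide))
private lemma q3 : Nat.nth Nat.Prime 3 = 7 := nth_eq _ _ (by norm_num) (cnt_eq _ _ (by decide))
private lemma q4 : Nat.nth Nat.Prime 4 = 11 := nth_eq _ _ (by norm_num) (cnt_eq _ _ (by decide))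
private lemma q5 : Nat.nth Nat.Prime 5 = 13 := nth_eq _ _ (by norm_num) (cnt_eq _ _ (by decide))
private lemma q6 : Nat.nth Nat.Prime 6 = 17 := nth_eq _ _ (by norm_num) (cnt_eq _ _ (by decide))
private lemma q7 : Nat.nth Nat.Prime 7 = 19 := nth_eq _ _ (by norm_num) (cnt_eq _ _ (by decide))
private lemma q8 : Nat.nth Nat.Prime 8 = 23 := nth_eq _ _ (by norm_num) (cnt_eq _ _ (by decide))
private lemma q9 : Nat.nth Nat.Prime 9 = 29 := nth_eq _ _ (by norm_num) (cnt_eq _ _ (by decide))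
private lemma q10 : Nat.nth Nat.Prime 10 = 31 := nth_eq _ _ (by norm_num) (cnt_eq _ _ (by decide))
private lemma q11 : Nat.nth Nat.Prime 11 = 37 := nth_eq _ _ (by norm_num) (cnt_eq _ _ (by decide))
private lemma q14 : Nat.nth Nat.Prime 14 = 47 := nth_eq _ _ (by norm_num) (cnt_eq _ _ (by decide))
private lemma q18 : Nat.nth Nat.Prime 18 = 67 := nth_eq _ _ (by norm_num) (cnt_eq _ _ (by decide))
private lemma q28 : Nat.nth Nat.Prime 28 = 109 := nth_eq _ _ (by norm_num) (cnt_eq _ _ (by decide))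
private lemma q55 : Nat.nth Nat.Prime 55 = 263 := nth_eq _ _ (by norm_num) (cnt_eq _ _ (by decide))

private lemma qmono {i j : ℕ} (h : i ≤ j) : Nat.nth Nat.Prime i ≤ Nat.nth Nat.Prime j :=
  (Nat.nth_le_nth Nat.infinite_setOf_prime).2 h

private lemma qsmono {i j : ℕ} (h : i < j) : Nat.nth Nat.Prime i < Nat.nth Nat.Prime j :=
  (Nat.nth_lt_nth Nat.infinite_setOf_prime).2 h

/-- minimality: any prime above the j-th prime is at least the (j+1)-st prime -/
private lemma next_le {j r : ℕ} (hr : r.Prime) (h : Nat.nth Nat.Prime j < r) :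
    Nat.nth Nat.Prime (j + 1) ≤ r := by
  have hc : Nat.nth Nat.Prime (Nat.count Nat.Prime r) = r := Nat.nth_count hr
  have hj : j < Nat.count Nat.Prime r := by
    by_contra hle
    push_neg at hle
    have := qmono hle
    omega
  have := qmono (show j + 1 ≤ Nat.count Nat.Prime r from hj)
  omega

/-- Bertrand for nth primes -/
private lemma qdouble (j : ℕ) : Nat.nth Nat.Prime (j + 1) < 2 * Nat.nth Nat.Prime j := by
  obtain ⟨r, hr, h1, h2⟩ :=
    Nat.exists_prime_lt_and_le_two_mul (Nat.nth Nat.Prime j) (Nat.prime_nth_prime j).pos.ne'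
  have hne : r ≠ 2 * Nat.nth Nat.Prime j := by
    rintro rfl
    have h2r : 2 ∣ 2 * Nat.nth Nat.Prime j := ⟨_, rfl⟩
    rcases (Nat.Prime.eq_one_or_self_of_dvd hr 2 h2r) with h | h
    · omega
    · have := (Nat.prime_nth_prime j).two_le; omega
  have := next_le hr h1
  omega

private lemma qgap {i : ℕ} (hi : 1 ≤ i) :
    Nat.nth Nat.Prime i + 2 ≤ Nat.nth Nat.Prime (i + 1) := by
  have h1 : Nat.nth Nat.Prime i < Nat.nth Nat.Prime (i + 1) := qsmono (Nat.lt_succ_self i)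
  have h3 : 3 ≤ Nat.nth Nat.Prime i := by have := qmono hi; rw [q1] at this; omega
  have ho1 : Odd (Nat.nth Nat.Prime i) :=
    (Nat.prime_nth_prime i).odd_of_ne_two (by omega)
  have h3' : Nat.nth Nat.Prime (i+1) ≠ 2 := by omega
  have ho2 : Odd (Nat.nth Nat.Prime (i + 1)) :=
    (Nat.prime_nth_prime (i+1)).odd_of_ne_two h3'
  obtain ⟨a, ha⟩ := ho1; obtain ⟨b, hb⟩ := ho2
  omega

private lemma qgrow {i : ℕ} (hi : 1 ≤ i) : 2 * i + 1 ≤ Nat.nth Nat.Prime i := by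
  induction i with
  | zero => omega
  | succ m ih =>
    rcases Nat.eq_or_lt_of_le hi with h | h
    · have hm0 : m = 0 := by omega
      subst hm0; rw [q1]
    · have hm : 1 ≤ m := by omega
      have := qgap hm
      have := ih hm
      omega

private lemma Ssum {j : ℕ} (hj : 1 ≤ j) :
    j * j + 1 ≤ ∑ i ∈ Finset.range j, Nat.nth Nat.Prime i := by
  induction j with
  | zero => omega
  | succ m ih =>
    rcases Nat.eq_or_lt_of_le hj with h | h
    · simp [← h, Finset.sum_range_succ, q0]
    · have hm : 1 ≤ m := by omega
      rw [Finset.sum_range_succ]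
      have := qgrow hm
      have := ih hm
      have hsq : (m+1)*(m+1) = m*m + 2*m + 1 := by ring
      omega


private lemma cb_le (n : ℕ) (hn : 0 < n) :
    Nat.centralBinom n ≤ (2 * n) ^ Nat.primeCounting' (2 * n + 1) := by
  conv_lhs => rw [← Nat.prod_pow_factorization_centralBinom n]
  rw [← Nat.primesBelow_card_eq_primeCounting']
  have h1 : ∏ i ∈ Finset.range (2 * n + 1), i ^ (Nat.centralBinom n).factorization i
      = ∏ i ∈ (2 * n + 1).primesBelow, i ^ (Nat.centralBinom n).factorization i := by
    unfold Nat.primesBelow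
    rw [Finset.prod_filter_of_ne]
    intro x _ hx
    by_contra hnp
    rw [Nat.factorization_eq_zero_of_not_prime _ hnp] at hx
    simp at hx
  rw [h1]
  calc ∏ i ∈ (2 * n + 1).primesBelow, i ^ (Nat.centralBinom n).factorization i
      ≤ ∏ _i ∈ (2 * n + 1).primesBelow, (2 * n) := by
        apply Finset.prod_le_prod'
        intro i _
        have : (Nat.centralBinom n) = (2 * n).choose n := rfl
        rw [this]
        exact Nat.pow_factorization_choose_le (by omega)
    _ = (2 * n) ^ (2 * n + 1).primesBelow.card := by rw [Finset.prod_const]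

private lemma pi_lb (n : ℕ) (hn : 512 ≤ n) :
    3 * Nat.sqrt (2 * n) < Nat.primeCounting' (2 * n + 1) := by
  by_contra hle
  push_neg at hle
  set t := Nat.primeCounting' (2 * n + 1) with ht
  -- natural number inequality 4^n < n * (2n)^t
  have h4 : 4 ^ n < n * (2 * n) ^ t :=
    lt_of_lt_of_le (Nat.four_pow_lt_mul_centralBinom n (by omega))
      (Nat.mul_le_mul_left n (cb_le n (by omega)))
  -- real versions
  have hx : (512 : ℝ) ≤ (n : ℝ) := by exact_mod_cast hn
  have hn0 : (0:ℝ) < (n:ℝ) := by linarith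
  have h2n0 : (0:ℝ) < 2 * (n:ℝ) := by linarith
  have h2n1 : (1:ℝ) ≤ 2 * (n:ℝ) := by linarith
  have B := Bertrand.real_main_inequality hx
  -- from B : x * (2x)^√(2x) * 4^(2x/3) ≤ 4^x, get a ≤ 4^(x/3)
  have hc : (0:ℝ) < (4:ℝ) ^ (2 * (n:ℝ) / 3) := Real.rpow_pos_of_pos (by norm_num) _
  have hA : (n:ℝ) * (2 * (n:ℝ)) ^ Real.sqrt (2 * (n:ℝ)) ≤ (4:ℝ) ^ ((n:ℝ) / 3) := by
    rw [show ((n:ℝ)/3) = (n:ℝ) - 2 * (n:ℝ) / 3 by ring, Real.rpow_sub (by norm_num)]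
    rw [le_div_iff₀ hc]
    exact B
  -- cube it
  have hA3 : (n:ℝ) ^ 3 * (2 * (n:ℝ)) ^ (3 * Real.sqrt (2 * (n:ℝ))) ≤ (4:ℝ) ^ (n:ℝ) := by
    have hnn : (0:ℝ) ≤ (n:ℝ) * (2 * (n:ℝ)) ^ Real.sqrt (2 * (n:ℝ)) := by positivity
    have := pow_le_pow_left₀ hnn hA 3
    calc (n:ℝ) ^ 3 * (2 * (n:ℝ)) ^ (3 * Real.sqrt (2 * (n:ℝ)))
        = ((n:ℝ) * (2 * (n:ℝ)) ^ Real.sqrt (2 * (n:ℝ))) ^ 3 := by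
          rw [mul_pow, ← Real.rpow_natCast ((2 * (n:ℝ)) ^ Real.sqrt (2 * (n:ℝ))) 3,
            ← Real.rpow_mul (le_of_lt h2n0)]
          push_cast
          ring_nf
      _ ≤ ((4:ℝ) ^ ((n:ℝ) / 3)) ^ 3 := this
      _ = (4:ℝ) ^ (n:ℝ) := by
          rw [← Real.rpow_natCast ((4:ℝ) ^ ((n:ℝ)/3)) 3, ← Real.rpow_mul (by norm_num)]
          norm_num
  -- t ≤ 3 √(2n) in ℝ
  have hsq : ((Nat.sqrt (2 * n) : ℕ) : ℝ) ≤ Real.sqrt (2 * (n:ℝ)) := by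
    have h := Nat.sqrt_le' (2 * n)
    have h2 : (Nat.sqrt (2 * n)) ^ 2 ≤ 2 * n := by nlinarith
    rw [show (2 * (n:ℝ)) = ((2 * n : ℕ) : ℝ) by push_cast; ring]
    exact Real.le_sqrt_of_sq_le (by exact_mod_cast h2)
  have htr : (t : ℝ) ≤ 3 * Real.sqrt (2 * (n:ℝ)) := by
    calc (t : ℝ) ≤ ((3 * Nat.sqrt (2 * n) : ℕ) : ℝ) := by exact_mod_cast hle
      _ = 3 * ((Nat.sqrt (2 * n) : ℕ) : ℝ) := by push_cast; ring
      _ ≤ 3 * Real.sqrt (2 * (n:ℝ)) := by linarith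
  -- combine
  have hr4 : ((4:ℕ) : ℝ) ^ (n:ℕ) < ((n:ℕ):ℝ) * ((2 * n : ℕ):ℝ) ^ (t:ℕ) := by exact_mod_cast h4
  have key : (n:ℝ) * (2 * (n:ℝ)) ^ ((t:ℕ):ℝ) ≤ (4:ℝ) ^ ((n:ℕ):ℝ) := by
    have h1 : (2 * (n:ℝ)) ^ ((t:ℕ):ℝ) ≤ (2 * (n:ℝ)) ^ (3 * Real.sqrt (2 * (n:ℝ))) :=
      Real.rpow_le_rpow_of_exponent_le h2n1 htr
    have h2 : (n:ℝ) ≤ (n:ℝ) ^ 3 := le_self_pow₀ (by linarith) (by norm_num)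
    calc (n:ℝ) * (2 * (n:ℝ)) ^ ((t:ℕ):ℝ)
        ≤ (n:ℝ) ^ 3 * (2 * (n:ℝ)) ^ (3 * Real.sqrt (2 * (n:ℝ))) := by
          apply mul_le_mul h2 h1 (by positivity) (by positivity)
      _ ≤ (4:ℝ) ^ (n:ℝ) := hA3
  rw [Real.rpow_natCast, Real.rpow_natCast] at key
  push_cast at hr4
  linarith
private lemma main_ineq {j : ℕ} (hj : 7 ≤ j) :
    3 * Nat.nth Nat.Prime j ≤ (∑ i ∈ Finset.range j, Nat.nth Nat.Prime i) + 2 := by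
  have hS := Ssum (show 1 ≤ j by omega)
  rcases lt_or_ge (Nat.nth Nat.Prime j) 1025 with hx1 | hx1
  · rcases le_or_gt 56 j with h | h
    · have h2 : 56 * 56 ≤ j * j := Nat.mul_le_mul h h
      omega
    rcases le_or_gt 29 j with h | h
    · have hxle : Nat.nth Nat.Prime j ≤ 263 := q55 ▸ qmono (show j ≤ 55 by omega)
      have h2 : 29 * 29 ≤ j * j := Nat.mul_le_mul h h
      omega
    rcases le_or_gt 19 j with h | h
    · have hxle : Nat.nth Nat.Prime j ≤ 109 := q28 ▸ qmono (show j ≤ 28 by omega)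
      have h2 : 19 * 19 ≤ j * j := Nat.mul_le_mul h h
      omega
    rcases le_or_gt 15 j with h | h
    · have hxle : Nat.nth Nat.Prime j ≤ 67 := q18 ▸ qmono (show j ≤ 18 by omega)
      have h2 : 15 * 15 ≤ j * j := Nat.mul_le_mul h h
      omega
    rcases le_or_gt 12 j with h | h
    · have hxle : Nat.nth Nat.Prime j ≤ 47 := q14 ▸ qmono (show j ≤ 14 by omega)
      have h2 : 12 * 12 ≤ j * j := Nat.mul_le_mul h h
      omega
    rcases le_or_gt 11 j with h | h
    · have hxle : Nat.nth Nat.Prime j ≤ 37 := q11 ▸ qmono (show j ≤ 11 by omega)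
      have h2 : 11 * 11 ≤ j * j := Nat.mul_le_mul h h
      omega
    rcases le_or_gt 10 j with h | h
    · have hxle : Nat.nth Nat.Prime j ≤ 31 := q10 ▸ qmono (show j ≤ 10 by omega)
      have h2 : 10 * 10 ≤ j * j := Nat.mul_le_mul h h
      omega
    · interval_cases j
      · rw [q7]
        have : ∑ i ∈ Finset.range 7, Nat.nth Nat.Prime i = 58 := by
          simp [Finset.sum_range_succ, q0, q1, q2, q3, q4, q5, q6]
        omega
      · rw [q8]
        have : ∑ i ∈ Finset.range 8, Nat.nth Nat.Prime i = 77 := by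
          simp [Finset.sum_range_succ, q0, q1, q2, q3, q4, q5, q6, q7]
        omega
      · rw [q9]
        have : ∑ i ∈ Finset.range 9, Nat.nth Nat.Prime i = 100 := by
          simp [Finset.sum_range_succ, q0, q1, q2, q3, q4, q5, q6, q7, q8]
        omega
  · -- large case via prime counting
    have hx2 : 2 < Nat.nth Nat.Prime j := by
      have := qsmono (show 0 < j by omega); rw [q0] at this; omega
    have hodd : Odd (Nat.nth Nat.Prime j) :=
      (Nat.prime_nth_prime j).odd_of_ne_two (by omega)
    obtain ⟨m, hm⟩ := hodd
    have hm512 : 512 ≤ m := by omega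
    have hpi := pi_lb m hm512
    rw [show 2 * m + 1 = Nat.nth Nat.Prime j by omega,
      Nat.primeCounting'_nth_eq j] at hpi
    have h2 : (3 * Nat.sqrt (2 * m) + 1) * (3 * Nat.sqrt (2 * m) + 1) ≤ j * j :=
      Nat.mul_le_mul (by omega) (by omega)
    have h1 : 2 * m < (Nat.sqrt (2*m) + 1) * (Nat.sqrt (2*m) + 1) := by
      simpa [Nat.succ_eq_add_one] using Nat.lt_succ_sqrt (2 * m)
    have e1 : (Nat.sqrt (2*m) + 1) * (Nat.sqrt (2*m) + 1)
        = Nat.sqrt (2*m) * Nat.sqrt (2*m) + 2 * Nat.sqrt (2*m) + 1 := by ring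
    have e2 : (3 * Nat.sqrt (2 * m) + 1) * (3 * Nat.sqrt (2 * m) + 1)
        = 9 * (Nat.sqrt (2*m) * Nat.sqrt (2*m)) + 6 * Nat.sqrt (2*m) + 1 := by ring
    omega

theorem stmt_6 (n k p : ℕ) (hn : 5 ≤ n) (hn9 : n ≠ 9)
    (hk : ∑ i ∈ Finset.range k, Nat.nth Nat.Prime i ≤ n)
    (hk' : n < ∑ i ∈ Finset.range (k + 1), Nat.nth Nat.Prime i)
    (hp : p.Prime) (hpn : p ≤ n) (hpmax : ∀ r : ℕ, r.Prime → r ≤ n → r ≤ p) :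
    n < (∑ i ∈ Finset.range (k - 1), Nat.nth Nat.Prime i) + p := by
  have hk2 : 2 ≤ k := by
    by_contra h
    push_neg at h
    interval_cases k
    · simp [Finset.sum_range_succ, Finset.sum_range_one, q0] at hk'
      omega
    · simp [Finset.sum_range_succ, Finset.sum_range_one, q0, q1] at hk'
      omega
  obtain ⟨j, rfl⟩ : ∃ j, k = j + 1 := ⟨k - 1, by omega⟩
  have hj1 : 1 ≤ j := by omega
  simp only [Nat.add_sub_cancel]
  rw [Finset.sum_range_succ] at hk
  rw [Finset.sum_range_succ, Finset.sum_range_succ] at hk'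
  have hq2 : 2 ≤ Nat.nth Nat.Prime j := (Nat.prime_nth_prime j).two_le
  rcases le_or_gt n (2 * ∑ i ∈ Finset.range j, Nat.nth Nat.Prime i) with hcase | hcase
  · obtain ⟨r, hr, h1, h2⟩ :=
      Nat.exists_prime_lt_and_le_two_mul (n - ∑ i ∈ Finset.range j, Nat.nth Nat.Prime i)
        (by omega)
    have hrp := hpmax r hr (by omega)
    omega
  · rcases le_or_gt 7 j with hj7 | hj7
    · exfalso
      have h1 := main_ineq hj7
      have h2 := qdouble j
      omega
    · interval_cases j
      · rw [q1] at hk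
        rw [q1, q2] at hk'
        simp only [Finset.sum_range_one, q0] at hk hk' ⊢
        rcases le_or_gt 7 n with h | h
        · have := hpmax 7 (by norm_num) h; omega
        · have := hpmax 5 (by norm_num) (by omega); omega
      · rw [q2] at hk
        rw [q2, q3] at hk'
        rw [Finset.sum_range_succ] at hk hk' ⊢
        simp only [Finset.sum_range_one, q0, q1] at hk hk' ⊢
        rcases le_or_gt 13 n with h | h
        · have := hpmax 13 (by norm_num) h; omega
        rcases le_or_gt 11 n with h' | h'
        · have := hpmax 11 (by norm_num) h'; omega
        · have := hpmax 7 (by norm_num) (by omega); omega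
      · rw [q3] at hk
        rw [q3, q4] at hk'
        rw [Finset.sum_range_succ, Finset.sum_range_succ] at hk hk' ⊢
        simp only [Finset.sum_range_one, q0, q1, q2] at hk hk' ⊢
        rcases le_or_gt 23 n with h | h
        · have := hpmax 23 (by norm_num) h; omega
        rcases le_or_gt 19 n with h' | h'
        · have := hpmax 19 (by norm_num) h'; omega
        · have := hpmax 17 (by norm_num) (by omega); omega
      · rw [q4] at hk
        rw [q4, q5] at hk'
        rw [Finset.sum_range_succ, Finset.sum_range_succ, Finset.sum_range_succ] at hk hk' ⊢
        simp only [Finset.sum_range_one, q0, q1, q2, q3] at hk hk' ⊢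
        rcases le_or_gt 31 n with h | h
        · have := hpmax 31 (by norm_num) h; omega
        · have := hpmax 23 (by norm_num) (by omega); omega
      · rw [q5] at hk
        rw [q5, q6] at hk'
        rw [Finset.sum_range_succ, Finset.sum_range_succ, Finset.sum_range_succ,
          Finset.sum_range_succ] at hk hk' ⊢
        simp only [Finset.sum_range_one, q0, q1, q2, q3, q4] at hk hk' ⊢
        have := hpmax 41 (by norm_num) (by omega); omega
      · rw [q6] at hk
        rw [q6, q7] at hk'
        rw [Finset.sum_range_succ, Finset.sum_range_succ, Finset.sum_range_succ,
          Finset.sum_range_succ, Finset.sum_range_succ] at hk hk' ⊢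
        simp only [Finset.sum_range_one, q0, q1, q2, q3, q4, q5] at hk hk' ⊢
        have := hpmax 53 (by norm_num) (by omega); omega
end

section
/- Let n ≥ 1 be an integer and let S be a nonempty finite set of primes. Then S is a prime simplex of the symmetric group S_n if and only if the sum of the primes in S is at most n. -/
/-- A finite set of primes `S` is a *prime simplex* of the group `G` if it is nonempty,
consists of primes, and `G` contains an element whose order is the product of the
primes in `S`. -/
def IsPrimeSimplex (G : Type*) [Group G] (S : Finset ℕ) : Prop :=
  S.Nonempty ∧ (∀ p ∈ S, p.Prime) ∧ ∃ g : G, orderOf g = ∏ p ∈ S, p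

/-- For a finset of naturals all at least 2, the sum is at most the product. -/
lemma sum_le_prod_of_two_le (s : Finset ℕ) (h : ∀ x ∈ s, 2 ≤ x) :
    ∑ x ∈ s, x ≤ ∏ x ∈ s, x := by
  induction s using Finset.induction_on with
  | empty => simp
  | @insert a s ha ih =>
    rw [Finset.sum_insert ha, Finset.prod_insert ha]
    rcases s.eq_empty_or_nonempty with rfl | hs
    · simp
    · have hprod : 2 ≤ ∏ x ∈ s, x := by
        obtain ⟨b, hb⟩ := hs
        have hpos : 0 < ∏ x ∈ s, x := Finset.prod_pos (fun x hx => by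
          have := h x (Finset.mem_insert_of_mem hx); omega)
        calc 2 ≤ b := h b (Finset.mem_insert_of_mem hb)
        _ ≤ ∏ x ∈ s, x := Nat.le_of_dvd hpos (Finset.dvd_prod_of_mem _ hb)
      have ha2 : 2 ≤ a := h a (Finset.mem_insert_self a s)
      have hsum : ∑ x ∈ s, x ≤ ∏ x ∈ s, x :=
        ih (fun x hx => h x (Finset.mem_insert_of_mem hx))
      nlinarith

theorem stmt_7 (n : ℕ) (hn : 1 ≤ n) (S : Finset ℕ) (hS : S.Nonempty)
    (hP : ∀ p ∈ S, p.Prime) :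
    IsPrimeSimplex (Equiv.Perm (Fin n)) S ↔ (∑ p ∈ S, p) ≤ n := by
  constructor
  · rintro ⟨-, -, g, hg⟩
    set m := g.cycleType with hm
    have hlcm : m.lcm = ∏ p ∈ S, p := by rw [hm, Equiv.Perm.lcm_cycleType, hg]
    -- every prime of S divides some cycle length
    have hmem : ∀ p ∈ S, ∃ c, c ∈ m.toFinset ∧ p ∣ c := by
      intro p hp
      have hpd : p ∣ m.prod := by
        refine dvd_trans ?_ (Multiset.lcm_dvd.2 (fun c hc => Multiset.dvd_prod hc))
        rw [hlcm]; exact Finset.dvd_prod_of_mem _ hp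
      obtain ⟨c, hc, hpc⟩ := (hP p hp).prime.exists_mem_multiset_dvd hpd
      exact ⟨c, Multiset.mem_toFinset.2 hc, hpc⟩
    choose! c hc1 hc2 using hmem
    have key : ∑ p ∈ S, p = ∑ j ∈ m.toFinset, ∑ p ∈ S.filter (fun p => c p = j), p :=
      (Finset.sum_fiberwise_of_maps_to hc1 _).symm
    have h2m : ∀ j ∈ m.toFinset, 2 ≤ j := fun j hj =>
      Equiv.Perm.two_le_of_mem_cycleType (Multiset.mem_toFinset.1 hj)
    have hinner : ∀ j ∈ m.toFinset, ∑ p ∈ S.filter (fun p => c p = j), p ≤ j := by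
      intro j hj
      have hdvd : (∏ p ∈ S.filter (fun p => c p = j), p) ∣ j := by
        refine Finset.prod_primes_dvd _ (fun p hp => (hP p (Finset.mem_filter.1 hp).1).prime)
          (fun p hp => ?_)
        obtain ⟨hpS, hpc⟩ := Finset.mem_filter.1 hp
        rw [← hpc]; exact hc2 p hpS
      have hj2 := h2m j hj
      calc ∑ p ∈ S.filter (fun p => c p = j), p
          ≤ ∏ p ∈ S.filter (fun p => c p = j), p :=
            sum_le_prod_of_two_le _ (fun p hp => (hP p (Finset.mem_filter.1 hp).1).two_le)
        _ ≤ j := Nat.le_of_dvd (by omega) hdvd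
    have h1 : ∑ p ∈ S, p ≤ ∑ j ∈ m.toFinset, j := by
      rw [key]; exact Finset.sum_le_sum hinner
    have h : ∑ j ∈ m.toFinset, j ≤ m.sum := by
      have h0 : ∑ j ∈ m.toFinset, j = m.dedup.sum := by
        rw [← Multiset.toFinset_val m]; exact (Finset.sum_val _).symm
      obtain ⟨t, ht⟩ := Multiset.le_iff_exists_add.1 (Multiset.dedup_le m)
      have heq := congrArg Multiset.sum ht
      rw [Multiset.sum_add] at heq
      omega
    have h3 : m.sum ≤ n := by
      rw [hm, Equiv.Perm.sum_cycleType]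
      simpa using (g.support.card_le_univ)
    omega
  · intro h
    refine ⟨hS, hP, ?_⟩
    have hex : ∃ g : Equiv.Perm (Fin n), g.cycleType = S.val := by
      rw [Equiv.Perm.exists_with_cycleType_iff]
      constructor
      · rw [Fintype.card_fin]
        have h0 : S.val.sum = ∑ p ∈ S, p := Finset.sum_val S
        omega
      · intro a ha
        exact (hP a ha).two_le
    obtain ⟨g, hg⟩ := hex
    refine ⟨g, ?_⟩
    rw [← Equiv.Perm.lcm_cycleType, hg]
    apply Nat.dvd_antisymm
    · refine Multiset.lcm_dvd.2 (fun c hc => ?_)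
      exact Finset.dvd_prod_of_mem _ hc
    · refine Finset.prod_primes_dvd _ (fun p hp => (hP p hp).prime) (fun p hp => ?_)
      exact Multiset.dvd_lcm hp
end

section
/- For an integer n ≥ 1, the prime simplicial complex Π(S_n) of the symmetric group S_n is pure if and only if n ≤ 4 or n = 9. -/
/-- A prime simplex is maximal if it is maximal with respect to inclusion among
prime simplices. -/
def IsMaximalPrimeSimplex (G : Type*) [Group G] (S : Finset ℕ) : Prop :=
  IsPrimeSimplex G S ∧ ∀ T : Finset ℕ, IsPrimeSimplex G T → S ⊆ T → T = S

/-- The prime simplicial complex of `G` is *pure* if all maximal prime simplices have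
the same cardinality. -/
def PurePrimeSimplicialComplex (G : Type*) [Group G] : Prop :=
  ∀ S T : Finset ℕ, IsMaximalPrimeSimplex G S → IsMaximalPrimeSimplex G T →
    S.card = T.card

open Finset


lemma sum_le_prod_of_two_le_s8 (S : Finset ℕ) (h : ∀ p ∈ S, 2 ≤ p) :
    S.sum id ≤ S.prod id := by
  induction S using Finset.induction with
  | empty => simp
  | @insert a s hx ih =>
    rw [Finset.sum_insert hx, Finset.prod_insert hx]
    have ha : 2 ≤ a := h a (mem_insert_self a s)
    have hs : ∀ p ∈ s, 2 ≤ p := fun p hp => h p (mem_insert_of_mem hp)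
    have := ih hs
    rcases s.eq_empty_or_nonempty with rfl | hne
    · simp
    · have h1 : 2 ≤ s.prod id := by
        obtain ⟨b, hb⟩ := hne
        calc 2 ≤ b := hs b hb
        _ = id b := rfl
        _ ≤ s.prod id := Finset.single_le_prod' (fun p hp => (by simp only [id]; exact le_trans one_le_two (hs p hp))) hb
      simp only [id] at *
      nlinarith [this, ha, h1]

lemma prime_dvd_multiset_lcm {p : ℕ} (hp : p.Prime) (m : Multiset ℕ) (h : p ∣ m.lcm) :
    ∃ c ∈ m, p ∣ c := by
  induction m using Multiset.induction with
  | empty =>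
    rw [Multiset.lcm_zero] at h
    exact absurd (Nat.dvd_one.mp h) hp.one_lt.ne'
  | cons a s ih =>
    rw [Multiset.lcm_cons] at h
    have : p ∣ a * s.lcm := h.trans (lcm_dvd (dvd_mul_right _ _) (dvd_mul_left _ _))
    rcases hp.dvd_mul.mp this with h1 | h2
    · exact ⟨a, Multiset.mem_cons_self a s, h1⟩
    · obtain ⟨c, hc, hdvd⟩ := ih h2
      exact ⟨c, Multiset.mem_cons_of_mem hc, hdvd⟩

lemma multiset_lcm_primes (S : Finset ℕ) (h : ∀ p ∈ S, p.Prime) :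
    S.val.lcm = S.prod id := by
  induction S using Finset.induction with
  | empty => simp
  | @insert a s hx ih =>
    have ha : a.Prime := h a (mem_insert_self a s)
    have hs : ∀ p ∈ s, p.Prime := fun p hp => h p (mem_insert_of_mem hp)
    rw [Finset.prod_insert hx, Finset.insert_val, Multiset.ndinsert_of_notMem hx,
      Multiset.lcm_cons, ih hs]
    have hcop : Nat.Coprime a (s.prod id) := by
      rw [Nat.Prime.coprime_iff_not_dvd ha]
      intro hdvd
      obtain ⟨q, hq, hdq⟩ := (Nat.Prime.prime ha).exists_mem_finset_dvd hdvd
      have := (Nat.prime_dvd_prime_iff_eq ha (hs q hq)).mp hdq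
      exact hx (this ▸ hq)
    rw [lcm_eq_nat_lcm, Nat.Coprime.lcm_eq_mul hcop]; simp

lemma simplex_iff (n : ℕ) (S : Finset ℕ) :
    IsPrimeSimplex (Equiv.Perm (Fin n)) S ↔
      S.Nonempty ∧ (∀ p ∈ S, p.Prime) ∧ S.sum id ≤ n := by
  constructor
  · rintro ⟨hne, hpr, g, hg⟩
    refine ⟨hne, hpr, ?_⟩
    classical
    set m := g.cycleType with hm
    have hlcm : m.lcm = ∏ p ∈ S, p := by rw [hm, Equiv.Perm.lcm_cycleType, hg]
    -- choose for each p ∈ S a cycle length divisible by p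
    have hex : ∀ p ∈ S, ∃ c ∈ m.toFinset, p ∣ c := by
      intro p hp
      have hdvd : p ∣ m.lcm := hlcm ▸ Finset.dvd_prod_of_mem _ hp
      obtain ⟨c, hc, hpc⟩ := prime_dvd_multiset_lcm (hpr p hp) m hdvd
      exact ⟨c, Multiset.mem_toFinset.mpr hc, hpc⟩
    choose! f hf1 hf2 using hex
    have key : S.sum id ≤ m.toFinset.sum id := by
      rw [← Finset.sum_fiberwise_of_maps_to hf1 id]
      refine Finset.sum_le_sum ?_
      intro c hc
      have hcpos : 2 ≤ c := Equiv.Perm.two_le_of_mem_cycleType (Multiset.mem_toFinset.mp hc)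
      calc (S.filter (fun p => f p = c)).sum id
          ≤ (S.filter (fun p => f p = c)).prod id :=
            sum_le_prod_of_two_le_s8 _ (fun p hp => (hpr p (Finset.mem_of_mem_filter p hp)).two_le)
        _ ≤ id c := by
            have hdvd : (S.filter (fun p => f p = c)).prod id ∣ c := by
              refine Finset.prod_primes_dvd c ?_ ?_
              · intro a haf
                exact (hpr a (Finset.mem_of_mem_filter a haf)).prime
              · intro a haf
                have := hf2 a (Finset.mem_of_mem_filter a haf)
                rw [(Finset.mem_filter.mp haf).2] at this
                exact this
            exact Nat.le_of_dvd (lt_of_lt_of_le two_pos hcpos) hdvd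
    have key2 : m.toFinset.sum id ≤ m.sum := by
      have hle : m.dedup ≤ m := m.dedup_le
      obtain ⟨u, hu⟩ := Multiset.le_iff_exists_add.mp hle
      have : m.toFinset.sum id = m.dedup.sum := by
        rw [Finset.sum]
        simp [Multiset.toFinset]
      rw [this]
      conv_rhs => rw [hu]
      rw [Multiset.sum_add]
      exact Nat.le_add_right _ _
    have key3 : m.sum ≤ n := by
      rw [hm, Equiv.Perm.sum_cycleType]
      have := Finset.card_le_univ g.support
      simpa using this
    omega
  · rintro ⟨hne, hpr, hsum⟩
    refine ⟨hne, hpr, ?_⟩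
    have hex : ∃ g : Equiv.Perm (Fin n), g.cycleType = S.val := by
      rw [Equiv.Perm.exists_with_cycleType_iff]
      constructor
      · rw [Fintype.card_fin, Finset.sum_val S]
        exact hsum
      · intro a ha
        exact (hpr a ha).two_le
    obtain ⟨g, hg⟩ := hex
    refine ⟨g, ?_⟩
    rw [← Equiv.Perm.lcm_cycleType, hg, multiset_lcm_primes S hpr]
    exact Finset.prod_congr rfl (fun _ _ => rfl)

def MaxArith (n : ℕ) (S : Finset ℕ) : Prop :=
  S.Nonempty ∧ (∀ p ∈ S, p.Prime) ∧ S.sum id ≤ n ∧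
    ∀ q ≤ n, q.Prime → q ∉ S → n < S.sum id + q

instance (n : ℕ) (S : Finset ℕ) : Decidable (MaxArith n S) := by
  unfold MaxArith; infer_instance

lemma maxSimplex_iff (n : ℕ) (S : Finset ℕ) :
    IsMaximalPrimeSimplex (Equiv.Perm (Fin n)) S ↔ MaxArith n S := by
  constructor
  · rintro ⟨hS, hmax⟩
    obtain ⟨hne, hpr, hsum⟩ := (simplex_iff n S).mp hS
    refine ⟨hne, hpr, hsum, ?_⟩
    intro q hq hqp hqS
    by_contra hle
    push_neg at hle
    have hT : IsPrimeSimplex (Equiv.Perm (Fin n)) (insert q S) := by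
      rw [simplex_iff]
      refine ⟨Finset.insert_nonempty q S, ?_, ?_⟩
      · intro p hp
        rcases Finset.mem_insert.mp hp with rfl | hp
        · exact hqp
        · exact hpr p hp
      · rw [Finset.sum_insert hqS]
        simpa [Nat.add_comm] using hle
    have := hmax _ hT (Finset.subset_insert q S)
    exact hqS (this ▸ Finset.mem_insert_self q S)
  · rintro ⟨hne, hpr, hsum, hmax⟩
    refine ⟨(simplex_iff n S).mpr ⟨hne, hpr, hsum⟩, ?_⟩
    intro T hT hST
    obtain ⟨hTne, hTpr, hTsum⟩ := (simplex_iff n T).mp hT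
    by_contra hne'
    obtain ⟨q, hqT, hqS⟩ := Finset.exists_of_ssubset (lt_of_le_of_ne hST (Ne.symm hne'))
    have hq : q.Prime := hTpr q hqT
    have hqle : q ≤ n := le_trans (Finset.single_le_sum (f := id)
      (fun i _ => Nat.zero_le _) hqT) hTsum
    have h1 : S.sum id + q ≤ T.sum id := by
      have : insert q S ⊆ T := Finset.insert_subset hqT hST
      calc S.sum id + q = (insert q S).sum id := by rw [Finset.sum_insert hqS, Nat.add_comm]; rfl
        _ ≤ T.sum id := Finset.sum_le_sum_of_subset this
    have := hmax q hqle hq hqS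
    omega

lemma not_pure_of_two (n : ℕ) (S T : Finset ℕ) (hS : MaxArith n S) (hT : MaxArith n T)
    (h : S.card ≠ T.card) : ¬ PurePrimeSimplicialComplex (Equiv.Perm (Fin n)) := by
  intro hpure
  exact h (hpure S T ((maxSimplex_iff n S).mpr hS) ((maxSimplex_iff n T).mpr hT))

lemma pure_of_forall (n c : ℕ)
    (h : ∀ S ∈ ((Finset.range (n+1)).filter Nat.Prime).powerset, MaxArith n S → S.card = c) :
    PurePrimeSimplicialComplex (Equiv.Perm (Fin n)) := by
  intro S T hS hT
  have key : ∀ U : Finset ℕ, IsMaximalPrimeSimplex (Equiv.Perm (Fin n)) U → U.card = c := by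
    intro U hU
    have hU2 := (maxSimplex_iff n U).mp hU
    obtain ⟨hne, hpr, hsum, -⟩ := id hU2
    refine h U ?_ hU2
    rw [Finset.mem_powerset]
    intro p hp
    rw [Finset.mem_filter, Finset.mem_range]
    have : p ≤ n := le_trans (Finset.single_le_sum (f := id)
      (fun i _ => Nat.zero_le _) hp) hsum
    exact ⟨by omega, hpr p hp⟩
  rw [key S hS, key T hT]


lemma largestPrime_facts {b : ℕ} (hb : 2 ≤ b) :
    (Nat.findGreatest Nat.Prime b).Prime ∧ b / 2 < Nat.findGreatest Nat.Prime b ∧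
      Nat.findGreatest Nat.Prime b ≤ b := by
  obtain ⟨p, hp, h1, h2⟩ := Nat.exists_prime_lt_and_le_two_mul (b / 2) (by omega)
  have hle : p ≤ b := le_trans h2 (by omega)
  have hge := Nat.le_findGreatest hle hp
  have hspec := Nat.findGreatest_spec hle hp
  exact ⟨hspec, by omega, Nat.findGreatest_le b⟩

def chain (b : ℕ) : Finset ℕ :=
  if h : b < 2 then ∅
  else
    have : 2 ≤ Nat.findGreatest Nat.Prime b := Nat.le_findGreatest (by omega) Nat.prime_two
    insert (Nat.findGreatest Nat.Prime b) (chain (b - Nat.findGreatest Nat.Prime b))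
decreasing_by omega

lemma chain_eq_lt {b : ℕ} (hb : b < 2) : chain b = ∅ := by rw [chain, dif_pos hb]

lemma chain_eq_ge {b : ℕ} (hb : 2 ≤ b) :
    chain b = insert (Nat.findGreatest Nat.Prime b)
      (chain (b - Nat.findGreatest Nat.Prime b)) := by
  rw [chain, dif_neg (by omega)]

lemma chain_mem : ∀ b, ∀ x ∈ chain b, x.Prime ∧ x ≤ b := by
  intro b
  induction b using Nat.strong_induction_on with
  | _ b ih =>
    rcases lt_or_ge b 2 with hb | hb
    · rw [chain_eq_lt hb]; simp
    · rw [chain_eq_ge hb]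
      obtain ⟨hp, hp2, hp3⟩ := largestPrime_facts hb
      intro x hx
      rcases Finset.mem_insert.mp hx with rfl | hx
      · exact ⟨hp, hp3⟩
      · have hlt : b - Nat.findGreatest Nat.Prime b < b := by
          have := hp.two_le; omega
        obtain ⟨h1, h2⟩ := ih _ hlt x hx
        exact ⟨h1, by omega⟩

lemma chain_sum : ∀ b, (chain b).sum id ≤ b ∧ b ≤ (chain b).sum id + 1 := by
  intro b
  induction b using Nat.strong_induction_on with
  | _ b ih =>
    rcases lt_or_ge b 2 with hb | hb
    · rw [chain_eq_lt hb]; simp; omega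
    · rw [chain_eq_ge hb]
      obtain ⟨hp, hp2, hp3⟩ := largestPrime_facts hb
      set p := Nat.findGreatest Nat.Prime b with hpdef
      have hnotmem : p ∉ chain (b - p) := by
        intro hmem
        have := (chain_mem _ _ hmem).2
        omega
      rw [Finset.sum_insert hnotmem]
      have hlt : b - p < b := by have := hp.two_le; omega
      obtain ⟨h1, h2⟩ := ih _ hlt
      simp only [id_eq] at h1 h2 ⊢
      omega

lemma chain_card : ∀ t b, b < 2 ^ (t + 1) → (chain b).card ≤ t := by
  intro t
  induction t with
  | zero =>
    intro b hb
    rw [chain_eq_lt (by omega)]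
    simp
  | succ t iht =>
    intro b hb
    rcases lt_or_ge b 2 with h2 | h2
    · rw [chain_eq_lt h2]; simp
    · rw [chain_eq_ge h2]
      obtain ⟨hp, hp2, hp3⟩ := largestPrime_facts h2
      set p := Nat.findGreatest Nat.Prime b with hpdef
      have hnotmem : p ∉ chain (b - p) := by
        intro hmem
        have := (chain_mem _ _ hmem).2
        omega
      rw [Finset.card_insert_of_notMem hnotmem]
      have hrec : b - p < 2 ^ (t + 1) := by
        have h := hb
        rw [pow_succ] at h
        omega
      have := iht (b - p) hrec
      omega

lemma chain_nonempty {b : ℕ} (hb : 2 ≤ b) : (chain b).Nonempty := by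
  rw [chain_eq_ge hb]
  exact Finset.insert_nonempty _ _

lemma chain_maxarith (n : ℕ) (hn : 2 ≤ n) : MaxArith n (chain n) := by
  obtain ⟨h1, h2⟩ := chain_sum n
  refine ⟨chain_nonempty hn, fun p hp => (chain_mem n p hp).1, h1, ?_⟩
  intro q _ hq _
  have := hq.two_le
  omega

lemma primes_invariant : ∀ c, 24 ≤ c →
    9 ≤ (Nat.primesBelow c).card ∧
    (Nat.primesBelow c).sum id ≤ 2 ^ ((Nat.primesBelow c).card - 1) ∧
    ∀ q ∈ Nat.primesBelow c, q ≤ 2 ^ ((Nat.primesBelow c).card - 2) := by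
  intro c hc
  induction c, hc using Nat.le_induction with
  | base => refine ⟨by decide, by decide, by decide⟩
  | succ c hc ih =>
    obtain ⟨hcard, hsum, hmax⟩ := ih
    rw [Nat.primesBelow_succ]
    by_cases hp : c.Prime
    · rw [if_pos hp]
      have hnotmem : c ∉ Nat.primesBelow c := Nat.notMem_primesBelow c
      rw [Finset.card_insert_of_notMem hnotmem, Finset.sum_insert hnotmem]
      set m := (Nat.primesBelow c).card with hm
      have hodd : c % 2 = 1 := Nat.odd_iff.mp (hp.odd_of_ne_two (by omega))
      obtain ⟨r, hr, h1, h2⟩ := Nat.exists_prime_lt_and_le_two_mul ((c - 1) / 2) (by omega)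
      have hrc : r < c := by omega
      have hrmem : r ∈ Nat.primesBelow c := Nat.mem_primesBelow.mpr ⟨hrc, hr⟩
      have hrbound := hmax r hrmem
      have hc2r : c < 2 * r := by omega
      have epow1 : 2 ^ (m - 1) = 2 * 2 ^ (m - 2) := by
        have : m - 1 = (m - 2) + 1 := by omega
        rw [this, pow_succ]; ring
      have epow2 : 2 ^ (m + 1 - 1) = 2 * 2 ^ (m - 1) := by
        have : m + 1 - 1 = (m - 1) + 1 := by omega
        rw [this, pow_succ]; ring
      have hcbound : c ≤ 2 ^ (m - 1) := by
        calc c ≤ 2 * r := by omega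
        _ ≤ 2 * 2 ^ (m - 2) := by omega
        _ = 2 ^ (m - 1) := epow1.symm
      refine ⟨by omega, ?_, ?_⟩
      · simp only [id_eq] at hsum ⊢
        omega
      · intro q hq
        have : m + 1 - 2 = m - 1 := by omega
        rw [this]
        rcases Finset.mem_insert.mp hq with rfl | hq
        · exact hcbound
        · have := hmax q hq
          omega
    · rw [if_neg hp]
      exact ⟨hcard, hsum, hmax⟩

lemma primesBelow_mono {a b : ℕ} (h : a ≤ b) : Nat.primesBelow a ⊆ Nat.primesBelow b := by
  intro x hx
  rw [Nat.mem_primesBelow] at hx ⊢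
  exact ⟨by omega, hx.2⟩

lemma big_witnesses (n : ℕ) (hn : 77 ≤ n) :
    ∃ S T : Finset ℕ, MaxArith n S ∧ MaxArith n T ∧ S.card ≠ T.card := by
  classical
  have hex : ∃ d, n < (Nat.primesBelow d).sum id := by
    obtain ⟨P, hPn, hP⟩ := Nat.exists_infinite_primes (n + 1)
    refine ⟨P + 1, ?_⟩
    have hmem : P ∈ Nat.primesBelow (P + 1) := Nat.mem_primesBelow.mpr ⟨by omega, hP⟩
    have := Finset.single_le_sum (f := id) (fun i _ => Nat.zero_le _) hmem
    have hidP : id P = P := rfl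
    have e1 : (∑ x ∈ (P + 1).primesBelow, id x) = ((P + 1).primesBelow.sum id) := rfl
    omega
  have hd : n < (Nat.primesBelow (Nat.find hex)).sum id := Nat.find_spec hex
  have hmin : ∀ e, e < Nat.find hex → (Nat.primesBelow e).sum id ≤ n := by
    intro e he
    have := Nat.find_min hex he
    omega
  have hd0 : Nat.find hex ≠ 0 := by
    intro h
    rw [h] at hd
    simp [Nat.primesBelow_zero] at hd
  obtain ⟨P, hPd⟩ : ∃ P, Nat.find hex = P + 1 := ⟨Nat.find hex - 1, by omega⟩
  rw [hPd] at hd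
  have hPle : (Nat.primesBelow P).sum id ≤ n := hmin P (by omega)
  have hsucc := Nat.primesBelow_succ P
  have hPp : P.Prime := by
    by_contra hnp
    rw [hsucc, if_neg hnp] at hd
    omega
  rw [hsucc, if_pos hPp] at hd
  have hPnot := Nat.notMem_primesBelow P
  rw [Finset.sum_insert hPnot] at hd
  have hidP : id P = P := rfl
  have ebr : (∑ x ∈ P.primesBelow, id x) = (P.primesBelow.sum id) := rfl
  have ebr : (∑ x ∈ P.primesBelow, id x) = (P.primesBelow.sum id) := rfl
  -- n < P + (primesBelow P).sum id
  have hP24 : 24 ≤ P + 1 := by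
    by_contra hcon
    have hsub : (Nat.primesBelow (P + 1)).sum id ≤ (Nat.primesBelow 23).sum id :=
      Finset.sum_le_sum_of_subset (primesBelow_mono (by omega))
    have h23 : (Nat.primesBelow 23).sum id = 77 := by decide
    rw [hsucc, if_pos hPp, Finset.sum_insert hPnot] at hsub
    omega
  obtain ⟨hc9, hsB, -⟩ := primes_invariant (P + 1) hP24
  have hcardP1 : (Nat.primesBelow (P + 1)).card = (Nat.primesBelow P).card + 1 := by
    rw [hsucc, if_pos hPp, Finset.card_insert_of_notMem hPnot]
  set m := (Nat.primesBelow P).card with hm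
  have hm8 : 8 ≤ m := by omega
  have hsum1 : (Nat.primesBelow (P + 1)).sum id = P + (Nat.primesBelow P).sum id := by
    rw [hsucc, if_pos hPp, Finset.sum_insert hPnot]
    simp only [id_eq]
  have hn2m : n < 2 ^ m := by
    rw [hsum1, hcardP1] at hsB
    have : m + 1 - 1 = m := by omega
    rw [this] at hsB
    omega
  -- B := primesBelow P is maximal, card m ; chain n maximal, card ≤ m - 1
  refine ⟨Nat.primesBelow P, chain n, ?_, chain_maxarith n (by omega), ?_⟩
  · refine ⟨⟨2, Nat.mem_primesBelow.mpr ⟨by omega, Nat.prime_two⟩⟩,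
      fun p hp => Nat.prime_of_mem_primesBelow hp, hPle, ?_⟩
    intro q hqn hqp hqB
    have hqP : P ≤ q := by
      by_contra hlt
      exact hqB (Nat.mem_primesBelow.mpr ⟨by omega, hqp⟩)
    omega
  · have hcc : (chain n).card ≤ m - 1 := by
      apply chain_card (m - 1) n
      have : m - 1 + 1 = m := by omega
      rw [this]
      exact hn2m
    omega

lemma not_pure_big (n : ℕ) (hn : 77 ≤ n) :
    ¬ PurePrimeSimplicialComplex (Equiv.Perm (Fin n)) := by
  obtain ⟨S, T, hS, hT, hc⟩ := big_witnesses n hn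
  exact not_pure_of_two n S T hS hT hc

theorem stmt_8 (n : ℕ) (hn : 1 ≤ n) :
    PurePrimeSimplicialComplex (Equiv.Perm (Fin n)) ↔ n ≤ 4 ∨ n = 9 := by
  constructor
  · intro hpure
    by_contra hcon
    push_neg at hcon
    obtain ⟨h4, h9⟩ := hcon
    rcases le_or_gt n 76 with hle | hgt
    · have h5 : 5 ≤ n := by omega
      interval_cases n
      · exact not_pure_of_two 5 {2,3} {5} (by decide) (by decide) (by decide) hpure
      · exact not_pure_of_two 6 {2,3} {5} (by decide) (by decide) (by decide) hpure
      · exact not_pure_of_two 7 {2,3} {7} (by decide) (by decide) (by decide) hpure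
      · exact not_pure_of_two 8 {2,3} {7} (by decide) (by decide) (by decide) hpure
      · exact absurd rfl h9
      · exact not_pure_of_two 10 {2,3,5} {7,3} (by decide) (by decide) (by decide) hpure
      · exact not_pure_of_two 11 {2,3,5} {11} (by decide) (by decide) (by decide) hpure
      · exact not_pure_of_two 12 {2,3,5} {11} (by decide) (by decide) (by decide) hpure
      · exact not_pure_of_two 13 {2,3,5} {13} (by decide) (by decide) (by decide) hpure
      · exact not_pure_of_two 14 {2,3,5} {13} (by decide) (by decide) (by decide) hpure
      · exact not_pure_of_two 15 {2,3,5} {13,2} (by decide) (by decide) (by decide) hpure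
      · exact not_pure_of_two 16 {2,3,5} {13,3} (by decide) (by decide) (by decide) hpure
      · exact not_pure_of_two 17 {2,3,5,7} {17} (by decide) (by decide) (by decide) hpure
      · exact not_pure_of_two 18 {2,3,5,7} {17} (by decide) (by decide) (by decide) hpure
      · exact not_pure_of_two 19 {2,3,5,7} {19} (by decide) (by decide) (by decide) hpure
      · exact not_pure_of_two 20 {2,3,5,7} {19} (by decide) (by decide) (by decide) hpure
      · exact not_pure_of_two 21 {2,3,5,7} {19,2} (by decide) (by decide) (by decide) hpure
      · exact not_pure_of_two 22 {2,3,5,7} {19,3} (by decide) (by decide) (by decide) hpure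
      · exact not_pure_of_two 23 {2,3,5,7} {23} (by decide) (by decide) (by decide) hpure
      · exact not_pure_of_two 24 {2,3,5,7} {23} (by decide) (by decide) (by decide) hpure
      · exact not_pure_of_two 25 {2,3,5,7} {23,2} (by decide) (by decide) (by decide) hpure
      · exact not_pure_of_two 26 {2,3,5,7} {23,3} (by decide) (by decide) (by decide) hpure
      · exact not_pure_of_two 27 {2,3,5,7} {23,3} (by decide) (by decide) (by decide) hpure
      · exact not_pure_of_two 28 {2,3,5,7,11} {23,5} (by decide) (by decide) (by decide) hpure
      · exact not_pure_of_two 29 {2,3,5,7,11} {29} (by decide) (by decide) (by decide) hpure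
      · exact not_pure_of_two 30 {2,3,5,7,11} {29} (by decide) (by decide) (by decide) hpure
      · exact not_pure_of_two 31 {2,3,5,7,11} {31} (by decide) (by decide) (by decide) hpure
      · exact not_pure_of_two 32 {2,3,5,7,11} {31} (by decide) (by decide) (by decide) hpure
      · exact not_pure_of_two 33 {2,3,5,7,11} {31,2} (by decide) (by decide) (by decide) hpure
      · exact not_pure_of_two 34 {2,3,5,7,11} {31,3} (by decide) (by decide) (by decide) hpure
      · exact not_pure_of_two 35 {2,3,5,7,11} {31,3} (by decide) (by decide) (by decide) hpure
      · exact not_pure_of_two 36 {2,3,5,7,11} {31,5} (by decide) (by decide) (by decide) hpure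
      · exact not_pure_of_two 37 {2,3,5,7,11} {37} (by decide) (by decide) (by decide) hpure
      · exact not_pure_of_two 38 {2,3,5,7,11} {37} (by decide) (by decide) (by decide) hpure
      · exact not_pure_of_two 39 {2,3,5,7,11} {37,2} (by decide) (by decide) (by decide) hpure
      · exact not_pure_of_two 40 {2,3,5,7,11} {37,3} (by decide) (by decide) (by decide) hpure
      · exact not_pure_of_two 41 {2,3,5,7,11,13} {41} (by decide) (by decide) (by decide) hpure
      · exact not_pure_of_two 42 {2,3,5,7,11,13} {41} (by decide) (by decide) (by decide) hpure
      · exact not_pure_of_two 43 {2,3,5,7,11,13} {43} (by decide) (by decide) (by decide) hpure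
      · exact not_pure_of_two 44 {2,3,5,7,11,13} {43} (by decide) (by decide) (by decide) hpure
      · exact not_pure_of_two 45 {2,3,5,7,11,13} {43,2} (by decide) (by decide) (by decide) hpure
      · exact not_pure_of_two 46 {2,3,5,7,11,13} {43,3} (by decide) (by decide) (by decide) hpure
      · exact not_pure_of_two 47 {2,3,5,7,11,13} {47} (by decide) (by decide) (by decide) hpure
      · exact not_pure_of_two 48 {2,3,5,7,11,13} {47} (by decide) (by decide) (by decide) hpure
      · exact not_pure_of_two 49 {2,3,5,7,11,13} {47,2} (by decide) (by decide) (by decide) hpure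
      · exact not_pure_of_two 50 {2,3,5,7,11,13} {47,3} (by decide) (by decide) (by decide) hpure
      · exact not_pure_of_two 51 {2,3,5,7,11,13} {47,3} (by decide) (by decide) (by decide) hpure
      · exact not_pure_of_two 52 {2,3,5,7,11,13} {47,5} (by decide) (by decide) (by decide) hpure
      · exact not_pure_of_two 53 {2,3,5,7,11,13} {53} (by decide) (by decide) (by decide) hpure
      · exact not_pure_of_two 54 {2,3,5,7,11,13} {53} (by decide) (by decide) (by decide) hpure
      · exact not_pure_of_two 55 {2,3,5,7,11,13} {53,2} (by decide) (by decide) (by decide) hpure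
      · exact not_pure_of_two 56 {2,3,5,7,11,13} {53,3} (by decide) (by decide) (by decide) hpure
      · exact not_pure_of_two 57 {2,3,5,7,11,13} {53,3} (by decide) (by decide) (by decide) hpure
      · exact not_pure_of_two 58 {2,3,5,7,11,13,17} {53,5} (by decide) (by decide) (by decide) hpure
      · exact not_pure_of_two 59 {2,3,5,7,11,13,17} {59} (by decide) (by decide) (by decide) hpure
      · exact not_pure_of_two 60 {2,3,5,7,11,13,17} {59} (by decide) (by decide) (by decide) hpure
      · exact not_pure_of_two 61 {2,3,5,7,11,13,17} {61} (by decide) (by decide) (by decide) hpure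
      · exact not_pure_of_two 62 {2,3,5,7,11,13,17} {61} (by decide) (by decide) (by decide) hpure
      · exact not_pure_of_two 63 {2,3,5,7,11,13,17} {61,2} (by decide) (by decide) (by decide) hpure
      · exact not_pure_of_two 64 {2,3,5,7,11,13,17} {61,3} (by decide) (by decide) (by decide) hpure
      · exact not_pure_of_two 65 {2,3,5,7,11,13,17} {61,3} (by decide) (by decide) (by decide) hpure
      · exact not_pure_of_two 66 {2,3,5,7,11,13,17} {61,5} (by decide) (by decide) (by decide) hpure
      · exact not_pure_of_two 67 {2,3,5,7,11,13,17} {67} (by decide) (by decide) (by decide) hpure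
      · exact not_pure_of_two 68 {2,3,5,7,11,13,17} {67} (by decide) (by decide) (by decide) hpure
      · exact not_pure_of_two 69 {2,3,5,7,11,13,17} {67,2} (by decide) (by decide) (by decide) hpure
      · exact not_pure_of_two 70 {2,3,5,7,11,13,17} {67,3} (by decide) (by decide) (by decide) hpure
      · exact not_pure_of_two 71 {2,3,5,7,11,13,17} {71} (by decide) (by decide) (by decide) hpure
      · exact not_pure_of_two 72 {2,3,5,7,11,13,17} {71} (by decide) (by decide) (by decide) hpure
      · exact not_pure_of_two 73 {2,3,5,7,11,13,17} {73} (by decide) (by decide) (by decide) hpure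
      · exact not_pure_of_two 74 {2,3,5,7,11,13,17} {73} (by decide) (by decide) (by decide) hpure
      · exact not_pure_of_two 75 {2,3,5,7,11,13,17} {73,2} (by decide) (by decide) (by decide) hpure
      · exact not_pure_of_two 76 {2,3,5,7,11,13,17} {73,3} (by decide) (by decide) (by decide) hpure
    · exact not_pure_big n (by omega) hpure
  · rintro (h4 | rfl)
    · interval_cases n
      · exact pure_of_forall 1 0 (by decide)
      · exact pure_of_forall 2 1 (by decide)
      · exact pure_of_forall 3 1 (by decide)
      · exact pure_of_forall 4 1 (by decide)
    · exact pure_of_forall 9 2 (by decide)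
end

section
/- Let G be a finite group and let k be the minimum number of prime simplices of Π(G) whose union equals π(G). Then for every m ≥ k, the set π(G) itself is a prime simplex of G^m, and consequently Π(G^m) consists of all nonempty subsets of π(G). -/
theorem stmt_11 (G : Type*) [Group G] [Finite G] [Nontrivial G]
    (k : ℕ) (T : Finset (Finset ℕ))
    -- `T` is a collection of prime simplices of `G` whose union is `π(G)`, of
    -- cardinality `k`, and `k` is minimal with this property:
    (hTsimp : ∀ S ∈ T, IsPrimeSimplex G S)
    (hTunion : T.sup id = (Nat.card G).primeFactors)
    (hTcard : T.card = k)
    (hmin : ∀ T' : Finset (Finset ℕ), (∀ S ∈ T', IsPrimeSimplex G S) →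
      T'.sup id = (Nat.card G).primeFactors → k ≤ T'.card) :
    ∀ m : ℕ, k ≤ m →
      IsPrimeSimplex (Fin m → G) ((Nat.card G).primeFactors) ∧
      (∀ S : Finset ℕ, IsPrimeSimplex (Fin m → G) S ↔
        S.Nonempty ∧ S ⊆ (Nat.card G).primeFactors) := by
  intro m hkm
  classical
  set π := (Nat.card G).primeFactors with hπ
  set N := ∏ p ∈ π, p with hNdef
  have hcard0 : Nat.card G ≠ 0 := Nat.card_pos.ne'
  have hπne : π.Nonempty :=
    (Nat.nonempty_primeFactors).2 (Finite.one_lt_card_iff_nontrivial.mpr ‹_›)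
  have hπprime : ∀ p ∈ π, p.Prime := fun p hp => Nat.prime_of_mem_primeFactors hp
  -- choose an element of order ∏ S for each S ∈ T
  have hx : ∀ S ∈ T, ∃ g : G, orderOf g = ∏ p ∈ S, p := fun S hS => (hTsimp S hS).2.2
  choose x hxord using hx
  -- an injection from T into Fin m
  have hkm' : T.card ≤ m := hTcard ▸ hkm
  let e : {S // S ∈ T} ≃ Fin T.card := T.equivFin
  let ι : {S // S ∈ T} → Fin m := fun s => Fin.castLE hkm' (e s)
  have hιinj : Function.Injective ι := fun a b h => by
    apply e.injective
    exact Fin.castLE_injective hkm' h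
  -- the element of the direct power
  let g : Fin m → G := fun i =>
    if h : ∃ s : {S // S ∈ T}, ι s = i then x (h.choose : {S // S ∈ T}).1
      (h.choose : {S // S ∈ T}).2 else 1
  have hgι : ∀ s : {S // S ∈ T}, g (ι s) = x s.1 s.2 := by
    intro s
    have h : ∃ s' : {S // S ∈ T}, ι s' = ι s := ⟨s, rfl⟩
    have : h.choose = s := hιinj h.choose_spec
    simp only [g, dif_pos h, this]
  -- every S ∈ T is a subset of π
  have hsubπ : ∀ S ∈ T, S ⊆ π := by
    intro S hS
    rw [← hTunion]
    exact Finset.le_sup (f := id) hS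
  -- coordinates of g have order dividing N
  have hcoorddvd : ∀ i, orderOf (g i) ∣ N := by
    intro i
    by_cases h : ∃ s : {S // S ∈ T}, ι s = i
    · simp only [g, dif_pos h, hxord]
      exact Finset.prod_dvd_prod_of_subset _ _ _ (hsubπ _ h.choose.2)
    · simp only [g]; rw [dif_neg h]; simp
  -- orderOf g ∣ N
  have hdvd1 : orderOf g ∣ N := by
    rw [orderOf_dvd_iff_pow_eq_one]
    funext i
    have := orderOf_dvd_iff_pow_eq_one.mp (hcoorddvd i)
    simpa using this
  -- N ∣ orderOf g
  have hcoord2 : ∀ i, orderOf (g i) ∣ orderOf g := by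
    intro i
    rw [orderOf_dvd_iff_pow_eq_one]
    have := congrFun (pow_orderOf_eq_one g) i
    simpa using this
  have hdvd2 : N ∣ orderOf g := by
    apply Finset.prod_primes_dvd
    · intro p hp
      exact (hπprime p hp).prime
    · intro p hp
      rw [← hTunion] at hp
      obtain ⟨S, hS, hpS⟩ := Finset.mem_sup.mp hp
      have h1 : p ∣ ∏ q ∈ S, q := Finset.dvd_prod_of_mem _ hpS
      have h2 : (∏ q ∈ S, q) ∣ orderOf g := by
        have := hcoord2 (ι ⟨S, hS⟩)
        rwa [hgι ⟨S, hS⟩, hxord] at this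
      exact h1.trans h2
  have hgord : orderOf g = N := Nat.dvd_antisymm hdvd1 hdvd2
  have hmain : IsPrimeSimplex (Fin m → G) π := ⟨hπne, hπprime, g, hgord⟩
  refine ⟨hmain, fun S => ⟨?_, ?_⟩⟩
  · rintro ⟨hSne, hSprime, g', hg'⟩
    refine ⟨hSne, fun p hp => ?_⟩
    have h1 : p ∣ orderOf g' := hg' ▸ Finset.dvd_prod_of_mem _ hp
    have h2 : orderOf g' ∣ Nat.card (Fin m → G) := orderOf_dvd_natCard g'
    have h3 : Nat.card (Fin m → G) = Nat.card G ^ m := by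
      simp [Nat.card_fun]
    have h4 : p ∣ Nat.card G := by
      refine (hSprime p hp).dvd_of_dvd_pow (n := m) ?_
      rw [← h3]; exact h1.trans h2
    exact Nat.mem_primeFactors.mpr ⟨hSprime p hp, h4, hcard0⟩
  · rintro ⟨hSne, hsub⟩
    refine ⟨hSne, fun p hp => hπprime p (hsub hp), ?_⟩
    set d := ∏ p ∈ π \ S, p with hd
    have hdS : d * ∏ p ∈ S, p = N := Finset.prod_sdiff hsub
    have hdpos : 0 < d := Finset.prod_pos fun p hp =>
      (hπprime p (Finset.mem_sdiff.mp hp).1).pos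
    have hddvd : d ∣ N := ⟨_, hdS.symm⟩
    refine ⟨g ^ d, ?_⟩
    rw [orderOf_pow, hgord, Nat.gcd_eq_right hddvd]
    exact Nat.div_eq_of_eq_mul_left hdpos (by rw [← hdS, mul_comm])
end

section
/- Let S be a finite group of even order and let m ≥ 2. Then the direct product G = S^m is not recognisable by prime simplicial complex; more precisely, the semidirect product H = G ⋊ C₂, where the nontrivial element of C₂ acts on S^m by swapping the first two coordinates, satisfies Π(H) = Π(G) and H is not isomorphic to G (since |H| = 2|G|). -/
universe u

namespace Stmt12Aux

/-- The swap automorphism of a power group. -/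
def swapAut {m : ℕ} (S : Type u) [Group S] (a b : Fin m) : MulAut (Fin m → S) where
  toFun f := f ∘ Equiv.swap a b
  invFun f := f ∘ Equiv.swap a b
  left_inv f := by ext i; simp [Equiv.swap_apply_self]
  right_inv f := by ext i; simp [Equiv.swap_apply_self]
  map_mul' f g := rfl

lemma swapAut_apply {m : ℕ} (S : Type u) [Group S] (a b : Fin m) (f : Fin m → S) (i : Fin m) :
    swapAut S a b f i = f (Equiv.swap a b i) := rfl

lemma swapAut_mul_self {m : ℕ} (S : Type u) [Group S] (a b : Fin m) :
    swapAut S a b * swapAut S a b = 1 := by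
  ext f i
  simp [swapAut, Equiv.swap_apply_self]

/-- The action of `C₂` on `S^m` swapping coordinates `a` and `b`. -/
def phi {m : ℕ} (S : Type u) [Group S] (a b : Fin m) :
    Multiplicative (ZMod 2) →* MulAut (Fin m → S) where
  toFun x := if x = Multiplicative.ofAdd 1 then swapAut S a b else 1
  map_one' := if_neg (by decide)
  map_mul' x y := by
    have hx : ∀ z : Multiplicative (ZMod 2), z = 1 ∨ z = Multiplicative.ofAdd 1 := by decide
    have h1 : (1 : Multiplicative (ZMod 2)) ≠ Multiplicative.ofAdd 1 := by decide
    have h2 : Multiplicative.ofAdd (1 : ZMod 2) * Multiplicative.ofAdd 1 = 1 := by decide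
    rcases hx x with h | h <;> rcases hx y with h' | h' <;> subst h <;> subst h' <;>
      simp [h1, h2, swapAut_mul_self]

lemma phi_ofAdd_one {m : ℕ} (S : Type u) [Group S] (a b : Fin m) :
    phi S a b (Multiplicative.ofAdd 1) = swapAut S a b := by
  simp [phi]

lemma orderOf_ofAdd_one : orderOf (Multiplicative.ofAdd (1 : ZMod 2)) = 2 :=
  orderOf_eq_prime (by decide) (by decide)

/-- Order of an element of a power group divides `n` iff all component orders do. -/
lemma orderOf_pi_dvd_iff {m : ℕ} {S : Type u} [Group S] (f : Fin m → S) (n : ℕ) :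
    orderOf f ∣ n ↔ ∀ i, orderOf (f i) ∣ n := by
  simp only [orderOf_dvd_iff_pow_eq_one, funext_iff, Pi.pow_apply, Pi.one_apply]

lemma orderOf_conj' {S : Type u} [Group S] (c y : S) :
    orderOf (c⁻¹ * y * c) = orderOf y := by
  have h : SemiconjBy c⁻¹ y (c⁻¹ * y * c) := by
    show c⁻¹ * y = c⁻¹ * y * c * c⁻¹
    group
  exact (SemiconjBy.orderOf_eq c⁻¹ h).symm

/-- Key construction: given `x : S^m` of odd order whose `b`-component is conjugate to its
`a`-component, and an element `t` of order 2, build an element of order `2 * orderOf x`. -/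
lemma exists_orderOf_two_mul {m : ℕ} {S : Type u} [Group S]
    {a b : Fin m} (hab : a ≠ b) {t : S} (ht : orderOf t = 2)
    (x : Fin m → S) (hconj : ∃ c : S, x b = c⁻¹ * x a * c) (hodd : ¬ 2 ∣ orderOf x) :
    ∃ w : Fin m → S, orderOf w = 2 * orderOf x := by
  obtain ⟨c, hc⟩ := hconj
  set k := orderOf x with hk
  refine ⟨Function.update x b t, ?_⟩
  set w := Function.update x b t with hw
  have hwb : w b = t := Function.update_self b t x
  have hwi : ∀ i, i ≠ b → w i = x i := fun i hi => Function.update_of_ne hi t x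
  have hcomp : ∀ i, orderOf (x i) ∣ k := (orderOf_pi_dvd_iff x k).mp dvd_rfl
  have h1 : orderOf w ∣ 2 * k := by
    rw [orderOf_pi_dvd_iff]
    intro i
    by_cases hib : i = b
    · subst hib; rw [hwb, ht]; exact ⟨k, rfl⟩
    · rw [hwi i hib]; exact (hcomp i).mul_left 2
  have hwcomp : ∀ i, orderOf (w i) ∣ orderOf w := (orderOf_pi_dvd_iff w _).mp dvd_rfl
  have h2 : 2 ∣ orderOf w := by
    have := hwcomp b; rwa [hwb, ht] at this
  have h3 : k ∣ orderOf w := by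
    rw [orderOf_pi_dvd_iff]
    intro i
    by_cases hib : i = b
    · subst hib
      rw [hc, orderOf_conj', ← hwi a hab]
      exact hwcomp a
    · rw [← hwi i hib]; exact hwcomp i
  have hcop : Nat.Coprime 2 k := Nat.coprime_two_left.mpr (Nat.odd_iff.mpr (by omega))
  exact Nat.dvd_antisymm h1 (hcop.mul_dvd_of_dvd_of_dvd h2 h3)

end Stmt12Aux

open Stmt12Aux SemidirectProduct in
theorem stmt_12 (S : Type u) [Group S] [Finite S] (hS : 2 ∣ Nat.card S)
    (m : ℕ) (hm : 2 ≤ m) :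
    -- There is an action `φ` of `C₂ = Multiplicative (ZMod 2)` on `G = S^m` whose
    -- nontrivial element swaps the first two coordinates, such that the corresponding
    -- semidirect product `H = G ⋊[φ] C₂` has the same prime simplicial complex as `G`
    -- and is not isomorphic to `G`; in particular, `G = S^m` is not recognisable by
    -- prime simplicial complex.
    (∃ φ : Multiplicative (ZMod 2) →* MulAut (Fin m → S),
      (∀ (f : Fin m → S) (i : Fin m),
        φ (Multiplicative.ofAdd (1 : ZMod 2)) f i =
          f (Equiv.swap (⟨0, by omega⟩ : Fin m) (⟨1, by omega⟩ : Fin m) i)) ∧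
      (∀ T : Finset ℕ,
        IsPrimeSimplex ((Fin m → S) ⋊[φ] Multiplicative (ZMod 2)) T ↔
          IsPrimeSimplex (Fin m → S) T) ∧
      IsEmpty (((Fin m → S) ⋊[φ] Multiplicative (ZMod 2)) ≃* (Fin m → S))) ∧
    ¬ (∀ (H : Type u) [Group H] [Finite H],
        (∀ T : Finset ℕ, IsPrimeSimplex H T ↔ IsPrimeSimplex (Fin m → S) T) →
          Nonempty (H ≃* (Fin m → S))) := by
  have ha : (0 : ℕ) < m := by omega
  have hbb : (1 : ℕ) < m := by omega
  set a : Fin m := ⟨0, ha⟩ with hadef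
  set b : Fin m := ⟨1, hbb⟩ with hbdef
  have hab : a ≠ b := by simp [hadef, hbdef, Fin.ext_iff]
  have hcase : ∀ z : Multiplicative (ZMod 2), z = 1 ∨ z = Multiplicative.ofAdd 1 := by decide
  have hequiv : ((Fin m → S) ⋊[phi S a b] Multiplicative (ZMod 2)) ≃
      (Fin m → S) × Multiplicative (ZMod 2) :=
    { toFun := fun x => (x.left, x.right)
      invFun := fun p => ⟨p.1, p.2⟩
      left_inv := fun x => rfl
      right_inv := fun p => rfl }
  have hfinH : Finite ((Fin m → S) ⋊[phi S a b] Multiplicative (ZMod 2)) :=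
    Finite.of_equiv _ hequiv.symm
  have horder : ∀ x : (Fin m → S) ⋊[phi S a b] Multiplicative (ZMod 2),
      x.right = Multiplicative.ofAdd 1 →
      orderOf x = 2 * orderOf (x.left * swapAut S a b x.left) := by
    intro x hx
    have hsq : x ^ 2 = inl (x.left * swapAut S a b x.left) := by
      ext
      · rw [pow_two, mul_left, hx, phi_ofAdd_one, left_inl]
      · rw [pow_two, mul_right, hx, right_inl]
        decide
    have h2 : 2 ∣ orderOf x := by
      have h := orderOf_map_dvd
        (rightHom : (Fin m → S) ⋊[phi S a b] Multiplicative (ZMod 2) →* Multiplicative (ZMod 2)) x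
      rwa [show rightHom x = x.right from rfl, hx, orderOf_ofAdd_one] at h
    have hdiv := orderOf_pow_of_dvd (two_ne_zero) h2
    rw [hsq, orderOf_injective inl inl_injective] at hdiv
    rw [hdiv]
    omega
  have hiff : ∀ T : Finset ℕ,
      IsPrimeSimplex ((Fin m → S) ⋊[phi S a b] Multiplicative (ZMod 2)) T ↔
        IsPrimeSimplex (Fin m → S) T := by
    intro T
    constructor
    · rintro ⟨hne, hpr, x, hx⟩
      refine ⟨hne, hpr, ?_⟩
      rcases hcase x.right with h | h
      · refine ⟨x.left, ?_⟩
        rw [← hx, ← orderOf_injective (inl (φ := phi S a b)) inl_injective x.left]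
        congr 1
        ext
        · rw [left_inl]
        · rw [right_inl, h]
      · obtain ⟨t, ht⟩ := exists_prime_orderOf_dvd_card' (G := S) 2 hS
        set y := x.left * swapAut S a b x.left with hy
        have hox : orderOf x = 2 * orderOf y := horder x h
        have h2T : 2 ∈ T := by
          have h2dvd : 2 ∣ ∏ p ∈ T, p := by rw [← hx, hox]; exact ⟨_, rfl⟩
          obtain ⟨p, hpT, hp2⟩ := (Nat.prime_two.prime.dvd_finset_prod_iff _).mp h2dvd
          rwa [← (Nat.prime_dvd_prime_iff_eq Nat.prime_two (hpr p hpT)).mp hp2] at hpT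
        have hsplit : ∏ p ∈ T, p = 2 * ∏ p ∈ T.erase 2, p :=
          (Finset.mul_prod_erase T _ h2T).symm
        have hoy : orderOf y = ∏ p ∈ T.erase 2, p := by
          have h' := hx
          rw [hox, hsplit] at h'
          omega
        have hodd : ¬ 2 ∣ orderOf y := by
          rw [hoy]
          intro hdvd
          obtain ⟨p, hpT, hp2⟩ := (Nat.prime_two.prime.dvd_finset_prod_iff _).mp hdvd
          exact (Finset.ne_of_mem_erase hpT)
            ((Nat.prime_dvd_prime_iff_eq Nat.prime_two
              (hpr p (Finset.mem_of_mem_erase hpT))).mp hp2).symm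
        have hconj : ∃ c : S, y b = c⁻¹ * y a * c := by
          refine ⟨x.left a, ?_⟩
          simp only [hy, Pi.mul_apply, swapAut_apply, Equiv.swap_apply_left,
            Equiv.swap_apply_right]
          group
        obtain ⟨w, hww⟩ := exists_orderOf_two_mul hab ht y hconj hodd
        exact ⟨w, by rw [hww, ← hox, hx]⟩
    · rintro ⟨hne, hpr, g, hg⟩
      exact ⟨hne, hpr, inl g, by rw [orderOf_injective (inl (φ := phi S a b)) inl_injective, hg]⟩
  have hempty :
      IsEmpty (((Fin m → S) ⋊[phi S a b] Multiplicative (ZMod 2)) ≃* (Fin m → S)) := by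
    refine ⟨fun e => ?_⟩
    have hcardH : Nat.card ((Fin m → S) ⋊[phi S a b] Multiplicative (ZMod 2)) =
        Nat.card (Fin m → S) * 2 := by
      rw [Nat.card_congr hequiv, Nat.card_prod]
      congr 1
      simp [Nat.card_eq_fintype_card]
    have hcardG : 0 < Nat.card (Fin m → S) := Nat.card_pos
    have := Nat.card_congr e.toEquiv
    rw [hcardH] at this
    omega
  refine ⟨⟨phi S a b, ?_, hiff, hempty⟩, ?_⟩
  · intro f i
    rw [phi_ofAdd_one, swapAut_apply]
  · intro hall
    obtain ⟨e⟩ := hall _ hiff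
    exact hempty.false e
end

section
/- Let G₁ and G₂ be finite groups. If there exist infinitely many pairwise non-isomorphic finite groups H with Π(H) = Π(G₁), then there exist infinitely many pairwise non-isomorphic finite groups K with Π(K) = Π(G₁ × G₂); that is, if G₁ is unrecognisable by prime simplicial complex then so is G₁ × G₂. -/
universe u

/-- Two groups are isomorphic. -/
def GroupsIso (G : Type*) [Group G] (H : Type*) [Group H] : Prop :=
  Nonempty (G ≃* H)

/-- There are infinitely many pairwise non-isomorphic finite groups with the same
prime simplicial complex as `G`. -/
def InfinitelyManySamePSC (G : Type u) [Group G] : Prop :=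
  ∃ (H : ℕ → Type u) (instH : ∀ n, Group (H n)) (_ : ∀ n, Finite (H n)),
    (∀ n, ∀ T : Finset ℕ, @IsPrimeSimplex (H n) (instH n) T ↔ IsPrimeSimplex G T) ∧
    ∀ i j : ℕ, i ≠ j → ¬ @GroupsIso (H i) (instH i) (H j) (instH j)

lemma squarefree_prod_primes {S : Finset ℕ} (hS : ∀ p ∈ S, p.Prime) :
    Squarefree (∏ p ∈ S, p) := by
  classical
  induction S using Finset.induction_on with
  | empty => simp
  | @insert q S hq ih =>
    rw [Finset.prod_insert hq]
    have hq' : Nat.Prime q := hS q (Finset.mem_insert_self _ _)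
    have hS' : ∀ p ∈ S, p.Prime := fun p hp => hS p (Finset.mem_insert_of_mem hp)
    have hco : Nat.Coprime q (∏ p ∈ S, p) := by
      rw [Nat.Prime.coprime_iff_not_dvd hq']
      intro hd
      obtain ⟨p, hp, hpd⟩ := (hq'.prime.dvd_finset_prod_iff _).mp hd
      exact hq (((Nat.prime_dvd_prime_iff_eq hq' (hS' p hp)).mp hpd) ▸ hp)
    exact (Nat.squarefree_mul hco).mpr ⟨hq'.squarefree, ih hS'⟩

/-- Decomposition of elements of given squarefree order in a product of finite groups. -/
lemma exists_orderOf_prod_iff {A B : Type*} [Group A] [Group B] [Finite A] [Finite B]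
    {S : Finset ℕ} (hS : ∀ p ∈ S, p.Prime) :
    (∃ g : A × B, orderOf g = ∏ p ∈ S, p) ↔
      ∃ S₁ S₂ : Finset ℕ, S₁ ∪ S₂ = S ∧ (∀ p ∈ S₁, p.Prime) ∧ (∀ p ∈ S₂, p.Prime) ∧
        (∃ a : A, orderOf a = ∏ p ∈ S₁, p) ∧ (∃ b : B, orderOf b = ∏ p ∈ S₂, p) := by
  classical
  have hn0 : (∏ p ∈ S, p) ≠ 0 :=
    Finset.prod_ne_zero_iff.2 fun p hp => (hS p hp).ne_zero
  have hsq : Squarefree (∏ p ∈ S, p) := squarefree_prod_primes hS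
  constructor
  · rintro ⟨⟨a, b⟩, hab⟩
    rw [Prod.orderOf] at hab
    have hx : orderOf a ∣ ∏ p ∈ S, p := hab ▸ Nat.dvd_lcm_left _ _
    have hy : orderOf b ∣ ∏ p ∈ S, p := hab ▸ Nat.dvd_lcm_right _ _
    have hxsq : Squarefree (orderOf a) := hsq.squarefree_of_dvd hx
    have hysq : Squarefree (orderOf b) := hsq.squarefree_of_dvd hy
    refine ⟨(orderOf a).primeFactors, (orderOf b).primeFactors, ?_,
      fun p hp => Nat.prime_of_mem_primeFactors hp,
      fun p hp => Nat.prime_of_mem_primeFactors hp,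
      ⟨a, (Nat.prod_primeFactors_of_squarefree hxsq).symm⟩,
      ⟨b, (Nat.prod_primeFactors_of_squarefree hysq).symm⟩⟩
    apply Finset.Subset.antisymm
    · apply Finset.union_subset
      · exact (Nat.primeFactors_prod hS) ▸ Nat.primeFactors_mono hx hn0
      · exact (Nat.primeFactors_prod hS) ▸ Nat.primeFactors_mono hy hn0
    · intro p hp
      have hpp := hS p hp
      have hpd : p ∣ (orderOf a) * (orderOf b) :=
        dvd_trans (Finset.dvd_prod_of_mem _ hp) (hab ▸ Nat.lcm_dvd_mul _ _)
      rcases (Nat.Prime.dvd_mul hpp).mp hpd with h | h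
      · exact Finset.mem_union_left _
          (Nat.mem_primeFactors.mpr ⟨hpp, h, (orderOf_pos a).ne'⟩)
      · exact Finset.mem_union_right _
          (Nat.mem_primeFactors.mpr ⟨hpp, h, (orderOf_pos b).ne'⟩)
  · rintro ⟨S₁, S₂, hU, hS₁, hS₂, ⟨a, ha⟩, ⟨b, hb⟩⟩
    refine ⟨(a, b), ?_⟩
    rw [Prod.orderOf, ha, hb]
    apply Nat.dvd_antisymm
    · apply Nat.lcm_dvd <;>
        [exact hU ▸ Finset.prod_dvd_prod_of_subset _ _ _ Finset.subset_union_left;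
         exact hU ▸ Finset.prod_dvd_prod_of_subset _ _ _ Finset.subset_union_right]
    · apply Finset.prod_primes_dvd
      · exact fun p hp => (hS p hp).prime
      · intro p hp
        rcases Finset.mem_union.mp (hU ▸ hp : p ∈ S₁ ∪ S₂) with h | h
        · exact dvd_trans (Finset.dvd_prod_of_mem _ h) (Nat.dvd_lcm_left _ _)
        · exact dvd_trans (Finset.dvd_prod_of_mem _ h) (Nat.dvd_lcm_right _ _)

/-- If `S₁ ⊆` primes and `A, A'` have the same prime simplices, then existence of an
element of order `∏ S₁` transfers. -/
lemma exists_order_transfer {A A' : Type*} [Group A] [Group A']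
    (hAA : ∀ T : Finset ℕ, IsPrimeSimplex A T ↔ IsPrimeSimplex A' T)
    {S₁ : Finset ℕ} (hS₁ : ∀ p ∈ S₁, p.Prime)
    (h : ∃ a : A, orderOf a = ∏ p ∈ S₁, p) : ∃ a : A', orderOf a = ∏ p ∈ S₁, p := by
  rcases S₁.eq_empty_or_nonempty with rfl | hne
  · exact ⟨1, by simp⟩
  · exact ((hAA S₁).mp ⟨hne, hS₁, h⟩).2.2

lemma psc_prod_transfer {A A' B : Type u} [Group A] [Group A'] [Group B]
    [Finite A] [Finite A'] [Finite B]
    (hAA : ∀ T : Finset ℕ, IsPrimeSimplex A T ↔ IsPrimeSimplex A' T) (T : Finset ℕ) :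
    IsPrimeSimplex (A × B) T ↔ IsPrimeSimplex (A' × B) T := by
  constructor
  · rintro ⟨hne, hpr, hg⟩
    obtain ⟨S₁, S₂, hU, h1, h2, ha, hb⟩ := (exists_orderOf_prod_iff hpr).mp hg
    exact ⟨hne, hpr, (exists_orderOf_prod_iff hpr).mpr
      ⟨S₁, S₂, hU, h1, h2, exists_order_transfer hAA h1 ha, hb⟩⟩
  · rintro ⟨hne, hpr, hg⟩
    obtain ⟨S₁, S₂, hU, h1, h2, ha, hb⟩ := (exists_orderOf_prod_iff hpr).mp hg
    exact ⟨hne, hpr, (exists_orderOf_prod_iff hpr).mpr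
      ⟨S₁, S₂, hU, h1, h2, exists_order_transfer (fun T => (hAA T).symm) h1 ha, hb⟩⟩

theorem stmt_13 (G₁ : Type u) [Group G₁] [Finite G₁] (G₂ : Type u) [Group G₂] [Finite G₂]
    (h : InfinitelyManySamePSC G₁) : InfinitelyManySamePSC (G₁ × G₂) := by
  classical
  obtain ⟨H, instH, finH, hpsc, hnon⟩ := h
  set c : ℕ → ℕ := fun n => Nat.card (H n) with hc
  -- fibers of the cardinality function are finite
  have hfib : ∀ m : ℕ, {n : ℕ | c n = m}.Finite := by
    intro m
    by_contra hinf
    haveI : Infinite {n : ℕ // c n = m} := Set.infinite_coe_iff.mpr hinf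
    -- transport each group to Fin m and compare multiplication tables
    letI := fun n => instH n
    have e : ∀ x : {n : ℕ // c n = m}, H x.1 ≃ Fin m :=
      fun x => Finite.equivFinOfCardEq x.2
    let φ : {n : ℕ // c n = m} → (Fin m → Fin m → Fin m) :=
      fun x a b => e x ((e x).symm a * (e x).symm b)
    obtain ⟨i, j, hij, heq⟩ := Finite.exists_ne_map_eq_of_infinite φ
    have hij' : i.1 ≠ j.1 := fun hv => hij (Subtype.ext hv)
    apply hnon i.1 j.1 hij'
    refine ⟨MulEquiv.mk' ((e i).trans (e j).symm) ?_⟩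
    intro x y
    have key : ∀ a b : Fin m, φ i a b = φ j a b := fun a b => congrFun (congrFun heq a) b
    have := key (e i x) (e i y)
    simp only [φ, Equiv.symm_apply_apply] at this
    simp only [Equiv.trans_apply]
    rw [this, Equiv.symm_apply_apply]
  -- the range of c is infinite
  have hrange : (Set.range c).Infinite := by
    intro hfin
    have : (Set.univ : Set ℕ).Finite := by
      have h2 : (Set.univ : Set ℕ) ⊆ ⋃ m ∈ Set.range c, {n : ℕ | c n = m} := by
        intro n _
        exact Set.mem_biUnion (Set.mem_range_self n) rfl
      exact ((hfin.biUnion (fun m _ => hfib m)).subset h2)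
    exact Set.infinite_univ this
  haveI : Infinite ↥(Set.range c) := Set.infinite_coe_iff.mpr hrange
  let emb := Infinite.natEmbedding ↥(Set.range c)
  have hmem : ∀ k : ℕ, (emb k).1 ∈ Set.range c := fun k => (emb k).2
  choose f hf using hmem
  -- the new family of groups
  refine ⟨fun k => H (f k) × G₂, fun k => @Prod.instGroup _ _ (instH (f k)) _,
    fun k => by haveI := finH (f k); exact Finite.instProd, ?_, ?_⟩
  · intro k T
    haveI := finH (f k)
    letI := instH (f k)
    exact psc_prod_transfer (hpsc (f k)) T
  · intro i j hij ⟨iso⟩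
    letI := instH (f i); letI := instH (f j)
    haveI := finH (f i); haveI := finH (f j)
    have hcard : Nat.card (H (f i) × G₂) = Nat.card (H (f j) × G₂) :=
      Nat.card_congr iso.toEquiv
    rw [Nat.card_prod, Nat.card_prod] at hcard
    have hG₂ : 0 < Nat.card G₂ := Nat.card_pos
    have : c (f i) = c (f j) := Nat.eq_of_mul_eq_mul_right hG₂ hcard
    rw [hf i, hf j] at this
    exact hij (emb.injective (Subtype.ext this))
end

section
/- Let G be a finite group and suppose there exists a finite group H with Π(H) = Π(G) such that H has a nontrivial normal solvable subgroup (i.e. H has nontrivial solvable radical). Then G is unrecognisable by prime simplicial complex: there exist infinitely many pairwise non-isomorphic finite groups K with Π(K) = Π(G). -/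
universe u

/-! ### Auxiliary constructions -/

/-- A semidirect product is in bijection with the product of the underlying sets. -/
def sdpEquivProd {N G : Type*} [Group N] [Group G] (φ : G →* MulAut N) :
    (N ⋊[φ] G) ≃ N × G where
  toFun x := (x.left, x.right)
  invFun p := ⟨p.1, p.2⟩
  left_inv _ := rfl
  right_inv _ := rfl

/-- Diagonal extension of automorphisms to a finite power. -/
def piAut (V : Type*) [Group V] (m : ℕ) : MulAut V →* MulAut (Fin m → V) where
  toFun e := MulEquiv.piCongrRight fun _ => e
  map_one' := rfl
  map_mul' _ _ := rfl

@[simp] lemma piAut_apply {V : Type*} [Group V] {m : ℕ} (e : MulAut V)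
    (v : Fin m → V) (j : Fin m) : piAut V m e v j = e (v j) := rfl

variable (H : Type u) [Group H] (V : Subgroup H) [hVn : V.Normal]

/-- The groups `V^(n+1) ⋊ H` used in the construction. -/
abbrev Kgrp (n : ℕ) : Type u :=
  (Fin (n + 1) → ↥V) ⋊[(piAut ↥V (n + 1)).comp MulAut.conjNormal] H

instance (n : ℕ) [Finite H] : Finite (Kgrp H V n) :=
  Finite.of_equiv _ (sdpEquivProd _).symm

/-- The homomorphism `Kgrp H V n →* H` sending `(v, h)` to `v j * h`. -/
def projMul (n : ℕ) (j : Fin (n + 1)) : Kgrp H V n →* H where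
  toFun x := ↑(x.left j) * x.right
  map_one' := by simp
  map_mul' a b := by
    show ↑((a * b).left j) * (a * b).right = _
    simp only [SemidirectProduct.mul_left, SemidirectProduct.mul_right, Pi.mul_apply,
      MonoidHom.comp_apply, piAut_apply, Subgroup.coe_mul, MulAut.conjNormal_apply]
    group

theorem Kgrp_card (n : ℕ) [Finite H] :
    Nat.card (Kgrp H V n) = (Nat.card ↥V) ^ (n + 1) * Nat.card H := by
  rw [Nat.card_congr (sdpEquivProd _), Nat.card_prod, Nat.card_fun]
  simp

theorem Kgrp_isPrimeSimplex_iff [Finite H] {p : ℕ} (hp : p.Prime)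
    (hVexp : ∀ x ∈ V, x ^ p = 1) (n : ℕ) (T : Finset ℕ) :
    IsPrimeSimplex (Kgrp H V n) T ↔ IsPrimeSimplex H T := by
  constructor
  · rintro ⟨hne, hpr, x, hx⟩
    refine ⟨hne, hpr, ?_⟩
    set Nn := ∏ q ∈ T, q with hNn
    set h := x.right with hh
    set m := orderOf h with hm
    have hm0 : 0 < m := orderOf_pos h
    have hmN : m ∣ Nn := by
      rw [← hx]
      exact orderOf_map_dvd (SemidirectProduct.rightHom) x
    have hx1 : x ^ m ∈ (SemidirectProduct.inl :
        (Fin (n+1) → ↥V) →* Kgrp H V n).range := by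
      rw [SemidirectProduct.range_inl_eq_ker_rightHom, MonoidHom.mem_ker, map_pow]
      show h ^ m = 1
      rw [hm, pow_orderOf_eq_one]
    obtain ⟨u, hu⟩ := hx1
    have hup1 : u ^ p = 1 := by
      funext i
      show (u ^ p) i = 1
      have : ((u i : H)) ^ p = 1 := hVexp _ (u i).2
      exact Subtype.ext (by simpa using this)
    have hup : x ^ (m * p) = 1 := by
      rw [pow_mul, ← hu, ← map_pow, hup1, map_one]
    have hNdvd : Nn ∣ m * p := hx ▸ orderOf_dvd_of_pow_eq_one hup
    obtain ⟨t, ht⟩ := hmN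
    have htp : t ∣ p := by
      have h2 : m * t ∣ m * p := ht ▸ hNdvd
      exact (Nat.mul_dvd_mul_iff_left hm0).mp h2
    rcases hp.eq_one_or_self_of_dvd t htp with h1 | hpt
    · rw [h1, mul_one] at ht
      exact ⟨h, by rw [← hm]; exact ht.symm⟩
    · rw [hpt] at ht
      -- `p` divides `Nn`, so `p ∈ T` and `m` is the product over `T.erase p`.
      classical
      have hpT : p ∈ T := by
        have hdvd : p ∣ Nn := ht ▸ dvd_mul_left p m
        obtain ⟨q, hqT, hq⟩ := (hp.prime.dvd_finset_prod_iff _).mp hdvd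
        rwa [(Nat.prime_dvd_prime_iff_eq hp (hpr q hqT)).mp hq]
      have hmprod : m = ∏ q ∈ T.erase p, q := by
        have h1 : p * ∏ q ∈ T.erase p, q = Nn := Finset.mul_prod_erase T (fun q => q) hpT
        rw [ht] at h1
        have hppos : 0 < p := hp.pos
        nlinarith [h1]
      have hpm : ¬ p ∣ m := by
        intro hd
        rw [hmprod] at hd
        obtain ⟨q, hq1, hq2⟩ := (hp.prime.dvd_finset_prod_iff _).mp hd
        have : p = q :=
          (Nat.prime_dvd_prime_iff_eq hp (hpr q (Finset.mem_of_mem_erase hq1))).mp hq2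
        exact Finset.ne_of_mem_erase hq1 this.symm
      have hxm : x ^ m ≠ 1 := by
        intro h0
        have hd : Nn ∣ m := hx ▸ orderOf_dvd_of_pow_eq_one h0
        have : m * p ≤ m := Nat.le_of_dvd hm0 (ht ▸ hd)
        nlinarith [hp.two_le]
      have hune : u ≠ 1 := fun h0 => hxm (by rw [← hu, h0, map_one])
      obtain ⟨j, hj⟩ := Function.ne_iff.mp hune
      set ψ := projMul H V n j with hψ
      set w := ψ x with hw
      have hwm1 : w ^ m = ↑(u j) := by
        rw [hw, ← map_pow, ← hu]
        show ↑((SemidirectProduct.inl u : Kgrp H V n).left j) *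
          (SemidirectProduct.inl u : Kgrp H V n).right = _
        simp
      have hwm : w ^ m ≠ 1 := by
        rw [hwm1]
        intro h0
        exact hj (Subtype.ext (by simpa using h0))
      have hwN : w ^ (m * p) = 1 := by rw [hw, ← map_pow, hup, map_one]
      have key : ∀ k, w ^ k = 1 → m ∣ k := by
        intro k hk
        have hwdef : w = ↑(x.left j) * h := rfl
        have hmk : (QuotientGroup.mk' V) w = (QuotientGroup.mk' V) h := by
          rw [hwdef, map_mul]
          have : (QuotientGroup.mk' V) ↑(x.left j) = 1 :=
            (QuotientGroup.eq_one_iff _).mpr (x.left j).2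
          rw [this, one_mul]
        have hhkV : h ^ k ∈ V := by
          have h1 : (QuotientGroup.mk' V) (h ^ k) = 1 := by
            rw [map_pow, ← hmk, ← map_pow, hk, map_one]
          rwa [QuotientGroup.mk'_apply, QuotientGroup.eq_one_iff] at h1
        have hk1 : h ^ k = 1 := by
          have h1 : orderOf (h ^ k) ∣ m := hm ▸ orderOf_pow_dvd k
          have h2 : orderOf (h ^ k) ∣ p := orderOf_dvd_of_pow_eq_one (hVexp _ hhkV)
          have hcop : Nat.Coprime p m := (Nat.Prime.coprime_iff_not_dvd hp).mpr hpm
          have h3 : orderOf (h ^ k) ∣ Nat.gcd p m := Nat.dvd_gcd h2 h1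
          rw [Nat.Coprime] at hcop
          rw [hcop, Nat.dvd_one] at h3
          exact orderOf_eq_one_iff.mp h3
        rw [hm]
        exact orderOf_dvd_of_pow_eq_one hk1
      have hdm : m ∣ orderOf w := key _ (pow_orderOf_eq_one w)
      have hdN : orderOf w ∣ m * p := orderOf_dvd_of_pow_eq_one hwN
      obtain ⟨s, hs⟩ := hdm
      have hsp : s ∣ p := (Nat.mul_dvd_mul_iff_left hm0).mp (hs ▸ hdN)
      rcases hp.eq_one_or_self_of_dvd s hsp with h1 | h2
      · exfalso
        rw [h1, mul_one] at hs
        exact hwm (by rw [← hs]; exact pow_orderOf_eq_one w)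
      · exact ⟨w, by rw [hs, h2]; exact ht.symm⟩
  · rintro ⟨hne, hpr, g, hg⟩
    exact ⟨hne, hpr, SemidirectProduct.inr g,
      by rw [orderOf_injective _ SemidirectProduct.inr_injective, hg]⟩

theorem stmt_14 (G : Type u) [Group G] [Finite G]
    (H : Type u) [Group H] [Finite H]
    (hHG : ∀ T : Finset ℕ, IsPrimeSimplex H T ↔ IsPrimeSimplex G T)
    (N : Subgroup H) (hN : N.Normal) (hNbot : N ≠ ⊥) (hsolv : IsSolvable N) :
    InfinitelyManySamePSC G := by
  classical
  -- Step 1: a nontrivial abelian subgroup of `H` that is normal in `H`.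
  obtain ⟨A, hAnorm, hAne, hAcomm⟩ :
      ∃ A : Subgroup H, A.Normal ∧ A ≠ ⊥ ∧ ∀ x ∈ A, ∀ y ∈ A, x * y = y * x := by
    set D : ℕ → Subgroup H := fun k => Nat.rec N (fun _ ih => ⁅ih, ih⁆) k with hD
    have hDs : ∀ k, D (k + 1) = ⁅D k, D k⁆ := fun k => rfl
    have hDnorm : ∀ k, (D k).Normal := by
      intro k; induction k with
      | zero => exact hN
      | succ k ih => exact @Subgroup.commutator_normal H _ (D k) (D k) ih ih
    have hmap : ∀ k, Subgroup.map N.subtype (derivedSeries ↥N k) = D k := by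
      intro k; induction k with
      | zero =>
        rw [derivedSeries_zero, ← MonoidHom.range_eq_map, Subgroup.range_subtype]
        rfl
      | succ k ih => rw [derivedSeries_succ, Subgroup.map_commutator, ih, hDs]
    obtain ⟨n, hn⟩ := hsolv.solvable
    have hex : ∃ k, D k = ⊥ := ⟨n, by rw [← hmap, hn, Subgroup.map_bot]⟩
    have hkpos : Nat.find hex ≠ 0 := by
      intro h0
      have := Nat.find_spec hex
      rw [h0] at this
      exact hNbot this
    obtain ⟨k', hk'⟩ := Nat.exists_eq_succ_of_ne_zero hkpos
    refine ⟨D k', hDnorm k', Nat.find_min hex (by omega), ?_⟩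
    intro x hx y hy
    open scoped commutatorElement in
    have hmem : ⁅x, y⁆ ∈ D (k' + 1) := by
      rw [hDs]
      exact Subgroup.commutator_mem_commutator hx hy
    have hbot : D (k' + 1) = ⊥ := by
      rw [← Nat.succ_eq_add_one, ← hk']; exact Nat.find_spec hex
    rw [hbot, Subgroup.mem_bot] at hmem
    exact commutatorElement_eq_one_iff_mul_comm.mp hmem
  -- Step 2: a prime `p` and an element of order `p` in `A`.
  obtain ⟨a, ha⟩ := Subgroup.ne_bot_iff_exists_ne_one.mp hAne
  have haH : (a : H) ≠ 1 := fun h => ha (Subtype.ext h)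
  set q := orderOf (a : H) with hq
  have hq1 : q ≠ 1 := fun h => haH (orderOf_eq_one_iff.mp h)
  have hq0 : 0 < q := orderOf_pos (a : H)
  set p := q.minFac with hpdef
  have hp : p.Prime := Nat.minFac_prime hq1
  set b : H := (a : H) ^ (q / p) with hb
  have hbp : b ^ p = 1 := by
    rw [hb, ← pow_mul, Nat.div_mul_cancel (Nat.minFac_dvd q), hq, pow_orderOf_eq_one]
  have hbne : b ≠ 1 := by
    intro h0
    have hd : q ∣ q / p := hq ▸ orderOf_dvd_of_pow_eq_one h0
    have hlt : q / p < q := Nat.div_lt_self hq0 hp.one_lt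
    have hpos : 0 < q / p := Nat.div_pos (Nat.minFac_le hq0) hp.pos
    exact absurd (Nat.le_of_dvd hpos hd) (by omega)
  have hbA : b ∈ A := A.pow_mem a.2 _
  -- Step 3: the normal subgroup `V` of exponent `p`.
  set V : Subgroup H :=
    { carrier := {x | x ∈ A ∧ x ^ p = 1}
      one_mem' := ⟨A.one_mem, one_pow p⟩
      mul_mem' := by
        rintro x y ⟨hxA, hxp⟩ ⟨hyA, hyp⟩
        refine ⟨A.mul_mem hxA hyA, ?_⟩
        have hc : Commute x y := hAcomm x hxA y hyA
        rw [hc.mul_pow, hxp, hyp, one_mul]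
      inv_mem' := by
        rintro x ⟨hxA, hxp⟩
        exact ⟨A.inv_mem hxA, by rw [inv_pow, hxp, inv_one]⟩ } with hVdef
  haveI hVnorm : V.Normal := by
    constructor
    rintro x ⟨hxA, hxp⟩ g
    refine ⟨hAnorm.conj_mem x hxA g, ?_⟩
    have hconj : (g * x * g⁻¹) ^ p = g * x ^ p * g⁻¹ := by
      simp [MulAut.conj_apply]
    rw [hconj, hxp, mul_one, mul_inv_cancel]
  have hVne : V ≠ ⊥ := by
    rw [Subgroup.ne_bot_iff_exists_ne_one]
    exact ⟨⟨b, hbA, hbp⟩, fun h => hbne (congrArg Subtype.val h)⟩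
  have hVexp : ∀ x ∈ V, x ^ p = 1 := fun x hx => hx.2
  -- Step 4: assemble the family of groups.
  refine ⟨fun n => Kgrp H V n, fun n => inferInstance, fun n => inferInstance, ?_, ?_⟩
  · intro n T
    exact (Kgrp_isPrimeSimplex_iff H V hp hVexp n T).trans (hHG T)
  · rintro i j hij ⟨e⟩
    have hc := Nat.card_congr e.toEquiv
    rw [Kgrp_card, Kgrp_card] at hc
    have hH0 : 0 < Nat.card H := Nat.card_pos
    have hV2 : 2 ≤ Nat.card ↥V := by
      haveI : Nontrivial ↥V := (Subgroup.nontrivial_iff_ne_bot V).mpr hVne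
      exact Finite.one_lt_card
    have hpow : (Nat.card ↥V) ^ (i + 1) = (Nat.card ↥V) ^ (j + 1) :=
      Nat.eq_of_mul_eq_mul_right hH0 hc
    have := Nat.pow_right_injective hV2 hpow
    omega
end
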